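/- arXiv:2205.00453 — 8 statements merged into one kernel-verified Lean document; each statement's English description precedes it below -/
import Mathlib

section
/- In the Witt algebra W with basis {L_m : m ∈ ℤ} and bracket [L_m, L_n] = (m-n) L_{m+n}, there is no nonzero element of the second exterior power ∧²W that is invariant under the adjoint action of W, i.e. if ω ∈ ∧²W satisfies (ad L_m ⊗ 1 + 1 ⊗ ad L_m)(ω) = 0 for all m ∈ ℤ, then ω = 0. -/
/-!
In the basis `L p ⊗ L q` of `W ⊗ W`, the `(p, q)`-coordinate of `L m ▷ ω` is
`(2m - p) c(p - m, q) + (2m - q) c(p, q - m)`, where `c` are the coordinates of `ω`.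
Taking `m = 0` gives `(p + q) c(p, q) = 0`, so only the coefficients `c(p, -p)` survive;
taking `m = p`, `q = 0` gives `p c(0, 0) + 2p c(p, -p) = 0`, and `c(0, 0) = 0` by antisymmetry.
-/

open TensorProduct

namespace Module.Basis

variable {R ι κ M N : Type*} [CommSemiring R] [AddCommMonoid M] [Module R M]
  [AddCommMonoid N] [Module R N] (b : Basis ι R M) (c : Basis κ R N)

theorem tensorProduct_repr_rTensor_of_coord_comp {f : M →ₗ[R] M} {i j : ι} {r : R}
    (hf : b.coord i ∘ₗ f = r • b.coord j) (z : M ⊗[R] N) (k : κ) :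
    (b.tensorProduct c).repr (f.rTensor N z) (i, k) = r * (b.tensorProduct c).repr z (j, k) := by
  induction z using TensorProduct.induction_on with
  | zero => simp
  | tmul x y =>
    have hx : b.repr (f x) i = r * b.repr x j := by simpa using LinearMap.congr_fun hf x
    simp only [LinearMap.rTensor_tmul, tensorProduct_repr_tmul_apply, smul_eq_mul, hx]
    ring
  | add z z' hz hz' => simp only [map_add, Finsupp.add_apply, hz, hz', mul_add]

theorem tensorProduct_repr_lTensor_of_coord_comp {g : N →ₗ[R] N} {k l : κ} {r : R}
    (hg : c.coord k ∘ₗ g = r • c.coord l) (z : M ⊗[R] N) (i : ι) :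
    (b.tensorProduct c).repr (g.lTensor M z) (i, k) = r * (b.tensorProduct c).repr z (i, l) := by
  induction z using TensorProduct.induction_on with
  | zero => simp
  | tmul x y =>
    have hy : c.repr (g y) k = r * c.repr y l := by simpa using LinearMap.congr_fun hg y
    simp only [LinearMap.lTensor_tmul, tensorProduct_repr_tmul_apply, smul_eq_mul, hy]
    ring
  | add z z' hz hz' => simp only [map_add, Finsupp.add_apply, hz, hz', mul_add]

theorem tensorProduct_repr_comm (z : M ⊗[R] N) (i : ι) (k : κ) :
    (c.tensorProduct b).repr (TensorProduct.comm R M N z) (k, i) =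
      (b.tensorProduct c).repr z (i, k) := by
  induction z using TensorProduct.induction_on with
  | zero => simp
  | tmul x y => simp only [comm_tmul, tensorProduct_repr_tmul_apply, smul_eq_mul, mul_comm]
  | add z z' hz hz' => simp only [map_add, Finsupp.add_apply, hz, hz']

end Module.Basis

theorem witt_coord_comp_ad {R W : Type*} [CommRing R] [AddCommGroup W] [Module R W]
    {L : Module.Basis ℤ R W} {β : W →ₗ[R] W →ₗ[R] W}
    (hβ : ∀ m n : ℤ, β (L m) (L n) = ((m - n : ℤ) : R) • L (m + n)) (m p : ℤ) :
    L.coord p ∘ₗ β (L m) = ((2 * m - p : ℤ) : R) • L.coord (p - m) := by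
  refine L.ext fun n => ?_
  simp only [LinearMap.comp_apply, hβ, map_smul, LinearMap.smul_apply, Module.Basis.coord_apply,
    Module.Basis.repr_self, Finsupp.single_apply, smul_eq_mul]
  by_cases h : m + n = p
  · rw [if_pos h, if_pos (by omega), show m - n = 2 * m - p by omega]
  · rw [if_neg h, if_neg (by omega), mul_zero, mul_zero]

theorem witt_invariant_coeff_eq_zero {R : Type*} [CommRing R] [IsDomain R] [CharZero R]
    {c : ℤ → ℤ → R} (hanti : ∀ p q, c q p = -c p q)
    (hinv : ∀ m p q,
      ((2 * m - p : ℤ) : R) * c (p - m) q + ((2 * m - q : ℤ) : R) * c p (q - m) = 0)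
    (p q : ℤ) : c p q = 0 := by
  have hdiag_zero : c 0 0 = 0 := by
    have h : (2 : R) * c 0 0 = 0 := by linear_combination hanti 0 0
    exact (mul_eq_zero.mp h).resolve_left two_ne_zero
  by_cases hpq : p + q = 0
  · obtain rfl : q = -p := by omega
    rcases eq_or_ne p 0 with rfl | hp
    · simpa using hdiag_zero
    have h := hinv p p 0
    simp only [sub_self, sub_zero, zero_sub, hdiag_zero, mul_zero, zero_add,
      show 2 * p - p = p by ring] at h
    exact (mul_eq_zero.mp h).resolve_left (by exact_mod_cast (by omega : 2 * p ≠ 0))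
  · have h := hinv 0 p q
    simp only [mul_zero, zero_sub, sub_zero] at h
    have h' : ((p + q : ℤ) : R) * c p q = 0 := by push_cast at h ⊢; linear_combination -h
    exact (mul_eq_zero.mp h').resolve_left (by exact_mod_cast hpq)

/-- In the Witt algebra `W` (basis `L m`, `m : ℤ`, bracket `⁅L m, L n⁆ = (m-n) • L (m+n)`),
there is no nonzero ad-invariant element of `∧² W` (realized as antisymmetric tensors in
`W ⊗ W`, with the Leibniz extension of the adjoint action). -/
theorem witt_no_adInvariant_wedge_two
    (W : Type) [AddCommGroup W] [Module ℂ W]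
    (L : Module.Basis ℤ ℂ W)
    (β : W →ₗ[ℂ] W →ₗ[ℂ] W)
    (hβ : ∀ m n : ℤ, β (L m) (L n) = ((m - n : ℤ) : ℂ) • L (m + n))
    (ω : W ⊗[ℂ] W)
    (hanti : TensorProduct.comm ℂ W W ω = -ω)
    (hinv : ∀ m : ℤ,
      (LinearMap.rTensor W (β (L m)) + LinearMap.lTensor W (β (L m))) ω = 0) :
    ω = 0 := by
  set c : ℤ → ℤ → ℂ := fun p q => (L.tensorProduct L).repr ω (p, q)
  have hc_anti : ∀ p q, c q p = -c p q := fun p q => by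
    simpa [c, hanti] using (L.tensorProduct_repr_comm L ω q p).symm
  have hc_inv : ∀ m p q : ℤ,
      ((2 * m - p : ℤ) : ℂ) * c (p - m) q + ((2 * m - q : ℤ) : ℂ) * c p (q - m) = 0 := by
    intro m p q
    have h := congrArg (fun z => (L.tensorProduct L).repr z (p, q)) (hinv m)
    simpa only [LinearMap.add_apply, map_add, Finsupp.add_apply, map_zero, Finsupp.coe_zero,
      Pi.zero_apply, L.tensorProduct_repr_rTensor_of_coord_comp L (witt_coord_comp_ad hβ m p),
      L.tensorProduct_repr_lTensor_of_coord_comp L (witt_coord_comp_ad hβ m q)] using h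
  refine (L.tensorProduct L).repr.map_eq_zero_iff.mp (Finsupp.ext fun ⟨p, q⟩ => ?_)
  exact witt_invariant_coeff_eq_zero hc_anti hc_inv p q
end

section
/- In the Witt algebra W, there is no nonzero ad-invariant element of the third exterior power ∧³W: if Ω ∈ ∧³W satisfies L_m ▷ Ω = 0 for all m ∈ ℤ (where ▷ is the extension of the adjoint action to ∧³W by the Leibniz rule), then Ω = 0. -/
open TensorProduct

/-!
Write `x ∈ W ⊗ M` as `∑ L i ⊗ f i` and let `N` be the largest index with `f N ≠ 0`. For
`m > max N 0`, the `N + m` coefficient of `L m ▷ x` is `(m - N) • f N`: the part of the action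
on `M` keeps the first index, and `f` vanishes beyond `N`. Hence no nonzero `x` is invariant, in
any tensor power of `W`.
-/

namespace WittAlgebra

variable {K W M : Type*} [Field K] [AddCommGroup W] [Module K W] [AddCommGroup M] [Module K M]
  (L : Module.Basis ℤ K W) (β : W →ₗ[K] W →ₗ[K] W)

theorem equivFinsuppOfBasisLeft_rTensor_add_lTensor_apply
    (hβ : ∀ m n : ℤ, β (L m) (L n) = ((m - n : ℤ) : K) • L (m + n))
    (m n : ℤ) (T : Module.End K M) (x : W ⊗[K] M) :
    equivFinsuppOfBasisLeft L ((LinearMap.rTensor M (β (L m)) + LinearMap.lTensor W T) x) n =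
      ((2 * m - n : ℤ) : K) • equivFinsuppOfBasisLeft L x (n - m)
        + T (equivFinsuppOfBasisLeft L x n) := by
  classical
  let c : ℤ → W ⊗[K] M →ₗ[K] M := fun k =>
    Finsupp.lapply k ∘ₗ (equivFinsuppOfBasisLeft L).toLinearMap
  suffices h : c n ∘ₗ (LinearMap.rTensor M (β (L m)) + LinearMap.lTensor W T) =
      ((2 * m - n : ℤ) : K) • c (n - m) + T ∘ₗ c n from LinearMap.congr_fun h x
  refine TensorProduct.ext (L.ext fun i => LinearMap.ext fun y => ?_)
  rcases eq_or_ne (m + i) n with rfl | hn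
  · simp [c, hβ, Finsupp.single_apply, sub_smul, two_mul, apply_ite T]
  · simp [c, hβ, Finsupp.single_apply, apply_ite T, hn, show i ≠ n - m by omega]

theorem eq_zero_of_rTensor_add_lTensor_eq_zero [CharZero K]
    (hβ : ∀ m n : ℤ, β (L m) (L n) = ((m - n : ℤ) : K) • L (m + n))
    (T : ℤ → Module.End K M) (x : W ⊗[K] M)
    (hx : ∀ m : ℤ, (LinearMap.rTensor M (β (L m)) + LinearMap.lTensor W (T m)) x = 0) :
    x = 0 := by
  set f := equivFinsuppOfBasisLeft L x
  suffices f = 0 from (equivFinsuppOfBasisLeft L).map_eq_zero_iff.mp this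
  by_contra hf
  set N := f.support.max' (Finsupp.support_nonempty_iff.mpr hf)
  have hN : f N ≠ 0 := Finsupp.mem_support_iff.mp (f.support.max'_mem _)
  set m := max N 0 + 1 with hm
  have hfar : f (N + m) = 0 := Finsupp.notMem_support_iff.mp fun h => by
    have := f.support.le_max' _ h
    omega
  have hcoeff := equivFinsuppOfBasisLeft_rTensor_add_lTensor_apply L β hβ m (N + m) (T m) x
  rw [hx m, map_zero, Finsupp.coe_zero, Pi.zero_apply, add_sub_cancel_right, hfar, map_zero,
    add_zero, eq_comm, smul_eq_zero, Int.cast_eq_zero] at hcoeff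
  exact hcoeff.elim (by omega) hN

end WittAlgebra

theorem witt_no_adInvariant_wedge_three_general
    (W : Type) [AddCommGroup W] [Module ℂ W]
    (L : Module.Basis ℤ ℂ W)
    (β : W →ₗ[ℂ] W →ₗ[ℂ] W)
    (hβ : ∀ m n : ℤ, β (L m) (L n) = ((m - n : ℤ) : ℂ) • L (m + n))
    (Ω : W ⊗[ℂ] (W ⊗[ℂ] W))
    -- ad-invariance: `L m ▷ Ω = 0` for all `m`
    (hinv : ∀ m : ℤ,
      (LinearMap.rTensor (W ⊗[ℂ] W) (β (L m))
        + LinearMap.lTensor W (LinearMap.rTensor W (β (L m)))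
        + LinearMap.lTensor W (LinearMap.lTensor W (β (L m)))) Ω = 0) :
    Ω = 0 :=
  WittAlgebra.eq_zero_of_rTensor_add_lTensor_eq_zero L β hβ
    (fun m => LinearMap.rTensor W (β (L m)) + LinearMap.lTensor W (β (L m))) Ω
    fun m => by simpa only [LinearMap.lTensor_add, add_assoc] using hinv m

/-- In the Witt algebra `W`, there is no nonzero ad-invariant element of `∧³ W`,
realized as totally antisymmetric tensors in `W ⊗ (W ⊗ W)`, with the Leibniz
extension of the adjoint action. -/
theorem witt_no_adInvariant_wedge_three
    (W : Type) [AddCommGroup W] [Module ℂ W]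
    (L : Module.Basis ℤ ℂ W)
    (β : W →ₗ[ℂ] W →ₗ[ℂ] W)
    (hβ : ∀ m n : ℤ, β (L m) (L n) = ((m - n : ℤ) : ℂ) • L (m + n))
    (Ω : W ⊗[ℂ] (W ⊗[ℂ] W))
    -- antisymmetry under the swap of the last two tensor factors
    (hanti23 : LinearMap.lTensor W (TensorProduct.comm ℂ W W).toLinearMap Ω = -Ω)
    -- antisymmetry under the swap of the first two tensor factors
    (hanti12 : (TensorProduct.assoc ℂ W W W)
        (LinearMap.rTensor W (TensorProduct.comm ℂ W W).toLinearMap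
          ((TensorProduct.assoc ℂ W W W).symm Ω)) = -Ω)
    -- ad-invariance: `L m ▷ Ω = 0` for all `m`
    (hinv : ∀ m : ℤ,
      (LinearMap.rTensor (W ⊗[ℂ] W) (β (L m))
        + LinearMap.lTensor W (LinearMap.rTensor W (β (L m)))
        + LinearMap.lTensor W (LinearMap.lTensor W (β (L m)))) Ω = 0) :
    Ω = 0 :=
  witt_no_adInvariant_wedge_three_general W L β hβ Ω hinv
end

section
/- Every 1-cocycle of nonzero degree on the Witt algebra with values in ∧²W is a coboundary. Precisely: if δ : W → ∧²W is a 1-cocycle that is homogeneous of degree d ≠ 0 (meaning δ(L_m) lies in the span of {L_i ∧ L_j : i + j = m + d} for all m), then there exists r ∈ ∧²W with δ(L_m) = L_m ▷ r for all m. -/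
/-!
The grading operator `L₀` acts on `L i ∧ L j` by the scalar `-(i + j)`, so every value
`δ (L m)` is an `L₀`-eigenvector with eigenvalue `-(m + d)`. The cocycle identity for the pair
`(L m, L 0)` then reads `m • δ (L m) = L m ▷ δ (L 0) + (m + d) • δ (L m)`, i.e.
`L m ▷ δ (L 0) = -d • δ (L m)`. Since `d ≠ 0`, `r = -d⁻¹ • δ (L 0)` works, and it is
antisymmetric because `δ (L 0)` is.
-/

open TensorProduct Module.End

section

variable {R M : Type*} [CommRing R] [AddCommGroup M] [Module R M]

/-- The paper's `x ▷ (a ⊗ b) = [x, a] ⊗ b + a ⊗ [x, b]`, with `β` as the bracket. -/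
def tensorAction (β : M →ₗ[R] M →ₗ[R] M) : M →ₗ[R] M ⊗[R] M →ₗ[R] M ⊗[R] M :=
  (LinearMap.rTensorHom M + LinearMap.lTensorHom M) ∘ₗ β

theorem tensorAction_tmul (β : M →ₗ[R] M →ₗ[R] M) (x a b : M) :
    tensorAction β x (a ⊗ₜ b) = β x a ⊗ₜ b + a ⊗ₜ β x b :=
  rfl

theorem tmul_mem_eigenspace_tensorAction {β : M →ₗ[R] M →ₗ[R] M} {x a b : M} {μ ν : R}
    (ha : β x a = μ • a) (hb : β x b = ν • b) :
    a ⊗ₜ b ∈ eigenspace (tensorAction β x) (μ + ν) := by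
  rw [mem_eigenspace_iff, tensorAction_tmul, ha, hb, add_smul, smul_tmul', tmul_smul]

theorem comm_eq_neg_of_mem_span_tmul_sub_tmul {w : M ⊗[R] M}
    (hw : w ∈ Submodule.span R {t | ∃ a b : M, t = a ⊗ₜ b - b ⊗ₜ a}) :
    TensorProduct.comm R M M w = -w := by
  induction hw using Submodule.span_induction with
  | mem t ht =>
    obtain ⟨a, b, rfl⟩ := ht
    simp
  | zero => simp
  | add u v _ _ hu hv => rw [map_add, hu, hv, neg_add]
  | smul c u _ hu => rw [map_smul, hu, smul_neg]

theorem tensorAction_apply_eq_smul_of_cocycle {β : M →ₗ[R] M →ₗ[R] M}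
    {δ : M →ₗ[R] M ⊗[R] M} {x y : M} {c μ : R}
    (hcoc : δ (β x y) = tensorAction β x (δ y) - tensorAction β y (δ x))
    (hxy : β x y = c • x) (hx : δ x ∈ eigenspace (tensorAction β y) μ) :
    tensorAction β x (δ y) = (c + μ) • δ x := by
  rw [mem_eigenspace_iff] at hx
  rw [hxy, map_smul, hx] at hcoc
  rw [add_smul, hcoc, sub_add_cancel]

theorem span_tmul_sub_tmul_le_eigenspace_tensorAction {β : M →ₗ[R] M →ₗ[R] M} {x : M}
    {L : ℤ → M} (hL0 : ∀ i : ℤ, β x (L i) = (-i : R) • L i) (n : ℤ) :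
    Submodule.span R {w | ∃ i j : ℤ, i + j = n ∧ w = L i ⊗ₜ[R] L j - L j ⊗ₜ[R] L i}
      ≤ eigenspace (tensorAction β x) (-n : R) := by
  rw [Submodule.span_le]
  rintro _ ⟨i, j, rfl, rfl⟩
  refine Submodule.sub_mem _ ?_ ?_
  · convert tmul_mem_eigenspace_tensorAction (hL0 i) (hL0 j) using 2
    push_cast
    ring
  · convert tmul_mem_eigenspace_tensorAction (hL0 j) (hL0 i) using 2
    push_cast
    ring

end

/-- Every 1-cocycle of nonzero degree `d` on the Witt algebra with values in `∧²W`
is a coboundary: if `δ (L m)` lies in the span of `{L i ∧ L j : i + j = m + d}` for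
all `m`, then `δ = x ↦ x ▷ r` for some `r ∈ ∧²W`. -/
theorem witt_nonzero_degree_cocycle_is_coboundary
    (W : Type) [AddCommGroup W] [Module ℂ W]
    (L : Module.Basis ℤ ℂ W)
    (β : W →ₗ[ℂ] W →ₗ[ℂ] W)
    (hβ : ∀ m n : ℤ, β (L m) (L n) = ((m - n : ℤ) : ℂ) • L (m + n))
    (δ : W →ₗ[ℂ] W ⊗[ℂ] W)
    (hcoc : ∀ x y : W, δ (β x y)
        = (LinearMap.rTensor W (β x) + LinearMap.lTensor W (β x)) (δ y)
        - (LinearMap.rTensor W (β y) + LinearMap.lTensor W (β y)) (δ x))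
    (d : ℤ) (hd : d ≠ 0)
    (hdeg : ∀ m : ℤ, δ (L m) ∈ Submodule.span ℂ
      {w : W ⊗[ℂ] W | ∃ i j : ℤ, i + j = m + d ∧
        w = L i ⊗ₜ[ℂ] L j - L j ⊗ₜ[ℂ] L i}) :
    ∃ r : W ⊗[ℂ] W, TensorProduct.comm ℂ W W r = -r ∧
      ∀ x : W, δ x = (LinearMap.rTensor W (β x) + LinearMap.lTensor W (β x)) r := by
  have hdC : (d : ℂ) ≠ 0 := by exact_mod_cast hd
  have hL0 : ∀ i : ℤ, β (L 0) (L i) = (-i : ℂ) • L i := fun i => by simpa using hβ 0 i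
  set r : W ⊗[ℂ] W := (-(d : ℂ)⁻¹) • δ (L 0)
  have hantisymm : TensorProduct.comm ℂ W W (δ (L 0)) = -δ (L 0) :=
    comm_eq_neg_of_mem_span_tmul_sub_tmul <|
      Submodule.span_mono (by rintro _ ⟨i, j, -, rfl⟩; exact ⟨_, _, rfl⟩) (hdeg 0)
  have hbasis : ∀ m : ℤ, δ (L m) = tensorAction β (L m) r := fun m => by
    have hact := tensorAction_apply_eq_smul_of_cocycle (hcoc (L m) (L 0))
      (by simpa using hβ m 0) (span_tmul_sub_tmul_le_eigenspace_tensorAction hL0 _ (hdeg m))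
    rw [map_smul, hact, smul_smul]
    symm
    convert one_smul ℂ (δ (L m)) using 2
    field_simp
    push_cast
    ring
  have hδ : δ = (tensorAction β).flip r := L.ext hbasis
  exact ⟨r, by rw [map_smul, hantisymm, smul_neg], fun x => LinearMap.congr_fun hδ x⟩
end

section
/- If δ is a degree-zero 1-cocycle on the Witt algebra W with values in ∧²W (i.e. δ(L_m) is a linear combination of L_{m-i} ∧ L_i), then δ(L_0) = 0. -/
/-!
Write `δ (L 0) = ∑ cᵢ L₋ᵢ ⊗ Lᵢ`; the coefficient function `c` is odd. Evaluating the cocycle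
identity at `(L 0, L 1)`, and using that `L 0` acts on tensors of degree `1` by `-1`, gives
`L 1 ▷ δ (L 0) = 0`. On coefficients this reads `(i + 1) cᵢ + (2 - i) cᵢ₋₁ = 0`. Oddness gives
`c₀ = 0`, the recurrence then kills `cᵢ` for `i ≥ 0`, and oddness again for `i < 0`.
-/

open TensorProduct

namespace Witt

variable {R : Type*} [CommRing R]

theorem eq_zero_of_odd_of_recurrence [NoZeroDivisors R] [CharZero R] {c : ℤ → R}
    (hodd : Function.Odd c)
    (hrec : ∀ i, ((i + 1 : ℤ) : R) * c i + ((2 - i : ℤ) : R) * c (i - 1) = 0) (i : ℤ) :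
    c i = 0 := by
  have hnat : ∀ n : ℕ, c n = 0 := by
    intro n
    induction n with
    | zero => exact CharZero.eq_neg_self_iff.mp (by simpa using hodd 0)
    | succ k ih =>
      have h := hrec (k + 1)
      rw [add_sub_cancel_right, ih, mul_zero, add_zero] at h
      refine (mul_eq_zero.mp h).resolve_left ?_
      exact_mod_cast (by omega : (k : ℤ) + 1 + 1 ≠ 0)
  obtain ⟨n, rfl | rfl⟩ := Int.eq_nat_or_neg i
  · exact hnat n
  · rw [hodd, hnat, neg_zero]

variable {M : Type*} [AddCommGroup M] [Module R M]

def leibnizTensor (f : M →ₗ[R] M) : M ⊗[R] M →ₗ[R] M ⊗[R] M :=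
  LinearMap.rTensor M f + LinearMap.lTensor M f

def wedgeDegree (L : Module.Basis ℤ R M) (m : ℤ) : Submodule R (M ⊗[R] M) :=
  Submodule.span R {w | ∃ i : ℤ, w = L (m - i) ⊗ₜ[R] L i - L i ⊗ₜ[R] L (m - i)}

section Coordinates

variable {L : Module.Basis ℤ R M} {m : ℤ} {w : M ⊗[R] M}

theorem repr_eq_zero_of_mem_wedgeDegree (hw : w ∈ wedgeDegree L m) {p q : ℤ} (hpq : p + q ≠ m) :
    (L.tensorProduct L).repr w (p, q) = 0 := by
  suffices wedgeDegree L m ≤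
      LinearMap.ker ((Finsupp.lapply (p, q)).comp (L.tensorProduct L).repr.toLinearMap) by
    simpa using this hw
  refine Submodule.span_le.mpr ?_
  rintro _ ⟨i, rfl⟩
  simp only [SetLike.mem_coe, LinearMap.mem_ker, LinearMap.comp_apply, LinearEquiv.coe_coe,
    Finsupp.lapply_apply, map_sub, Module.Basis.tensorProduct_repr_tmul_apply,
    Module.Basis.repr_self, Finsupp.single_apply, smul_eq_mul]
  split_ifs <;> first | omega | simp

theorem repr_swap_of_mem_wedgeDegree (hw : w ∈ wedgeDegree L m) (p q : ℤ) :
    (L.tensorProduct L).repr w (q, p) = -(L.tensorProduct L).repr w (p, q) := by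
  suffices wedgeDegree L m ≤ LinearMap.ker
      ((Finsupp.lapply (p, q) + Finsupp.lapply (q, p)).comp
        (L.tensorProduct L).repr.toLinearMap) by
    simpa [eq_neg_iff_add_eq_zero, add_comm] using this hw
  refine Submodule.span_le.mpr ?_
  rintro _ ⟨i, rfl⟩
  simp only [SetLike.mem_coe, LinearMap.mem_ker, LinearMap.comp_apply, LinearMap.add_apply,
    LinearEquiv.coe_coe, Finsupp.lapply_apply, map_sub,
    Module.Basis.tensorProduct_repr_tmul_apply, Module.Basis.repr_self, Finsupp.single_apply,
    smul_eq_mul]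
  split_ifs <;> first | omega | simp

end Coordinates

section Bracket

variable {L : Module.Basis ℤ R M} {β : M →ₗ[R] M →ₗ[R] M}
  (hβ : ∀ m n : ℤ, β (L m) (L n) = ((m - n : ℤ) : R) • L (m + n))
include hβ

theorem leibnizTensor_L_zero_of_mem_wedgeDegree {m : ℤ} {w : M ⊗[R] M}
    (hw : w ∈ wedgeDegree L m) : leibnizTensor (β (L 0)) w = (-m : R) • w := by
  refine LinearMap.eqOn_span' (g := (-m : R) • LinearMap.id) ?_ hw
  rintro _ ⟨i, rfl⟩
  simp only [leibnizTensor, map_sub, LinearMap.add_apply, LinearMap.rTensor_tmul,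
    LinearMap.lTensor_tmul, hβ, ← smul_tmul', tmul_smul, zero_add,
    LinearMap.smul_apply, LinearMap.id_apply]
  push_cast
  module

theorem repr_leibnizTensor_L_apply (n a b : ℤ) (z : M ⊗[R] M) :
    (L.tensorProduct L).repr (leibnizTensor (β (L n)) z) (a, b) =
      ((2 * n - a : ℤ) : R) * (L.tensorProduct L).repr z (a - n, b) +
        ((2 * n - b : ℤ) : R) * (L.tensorProduct L).repr z (a, b - n) := by
  let coord (p : ℤ × ℤ) : M ⊗[R] M →ₗ[R] R :=
    (Finsupp.lapply p).comp (L.tensorProduct L).repr.toLinearMap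
  suffices (coord (a, b)).comp (leibnizTensor (β (L n))) =
      ((2 * n - a : ℤ) : R) • coord (a - n, b) + ((2 * n - b : ℤ) : R) • coord (a, b - n) from
    LinearMap.congr_fun this z
  refine (L.tensorProduct L).ext fun ⟨p, q⟩ => ?_
  simp only [coord, leibnizTensor, LinearMap.comp_apply, LinearMap.add_apply,
    LinearMap.smul_apply, Finsupp.lapply_apply, LinearEquiv.coe_coe,
    Module.Basis.tensorProduct_apply, LinearMap.rTensor_tmul, LinearMap.lTensor_tmul, hβ,
    ← smul_tmul', tmul_smul, map_add, map_smul, Module.Basis.tensorProduct_repr_tmul_apply,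
    Module.Basis.repr_self, Finsupp.single_apply, smul_eq_mul]
  split_ifs <;> first
    | omega
    | (subst_vars; push_cast; ring1)
    -- both source indices `(a - n, b)` and `(a, b - n)` hit the basis vector only if `n = 0`
    | (obtain rfl : n = 0 := by omega
       subst_vars; simp)

theorem leibnizTensor_L_apply_delta_L_zero {δ : M →ₗ[R] M ⊗[R] M}
    (hcoc : ∀ x y : M, δ (β x y) = leibnizTensor (β x) (δ y) - leibnizTensor (β y) (δ x))
    {m : ℤ} (hm : δ (L m) ∈ wedgeDegree L m) :
    leibnizTensor (β (L m)) (δ (L 0)) = 0 := by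
  have h := hcoc (L 0) (L m)
  rw [hβ, zero_add, map_smul, leibnizTensor_L_zero_of_mem_wedgeDegree hβ hm] at h
  push_cast at h
  linear_combination (norm := module) h

theorem eq_zero_of_mem_wedgeDegree_zero [NoZeroDivisors R] [CharZero R] {w : M ⊗[R] M}
    (hw : w ∈ wedgeDegree L 0) (hL1 : leibnizTensor (β (L 1)) w = 0) : w = 0 := by
  have hc : ∀ i, (L.tensorProduct L).repr w (-i, i) = 0 := by
    refine eq_zero_of_odd_of_recurrence (fun i => ?_) (fun i => ?_)
    · simpa using repr_swap_of_mem_wedgeDegree hw (-i) i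
    · have h := repr_leibnizTensor_L_apply hβ 1 (1 - i) i w
      rw [hL1, map_zero, Finsupp.coe_zero, Pi.zero_apply] at h
      convert h.symm using 3 <;> ring_nf
  rw [← (L.tensorProduct L).repr.map_eq_zero_iff]
  ext ⟨p, q⟩
  by_cases hpq : p + q = 0
  · obtain rfl : p = -q := by omega
    exact hc q
  · exact repr_eq_zero_of_mem_wedgeDegree hw hpq

end Bracket

end Witt

/-- If `δ` is a degree-zero 1-cocycle on the Witt algebra `W` with values in `∧²W`
(i.e. `δ (L m)` is a linear combination of wedges `L (m - i) ∧ L i`), then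
`δ (L 0) = 0`. -/
theorem witt_degree_zero_cocycle_vanishes_on_L0
    (W : Type) [AddCommGroup W] [Module ℂ W]
    (L : Module.Basis ℤ ℂ W)
    (β : W →ₗ[ℂ] W →ₗ[ℂ] W)
    (hβ : ∀ m n : ℤ, β (L m) (L n) = ((m - n : ℤ) : ℂ) • L (m + n))
    (δ : W →ₗ[ℂ] W ⊗[ℂ] W)
    (hcoc : ∀ x y : W, δ (β x y)
        = (LinearMap.rTensor W (β x) + LinearMap.lTensor W (β x)) (δ y)
        - (LinearMap.rTensor W (β y) + LinearMap.lTensor W (β y)) (δ x))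
    (hdeg : ∀ m : ℤ, δ (L m) ∈ Submodule.span ℂ
      {w : W ⊗[ℂ] W | ∃ i : ℤ,
        w = L (m - i) ⊗ₜ[ℂ] L i - L i ⊗ₜ[ℂ] L (m - i)}) :
    δ (L 0) = 0 := by
  exact Witt.eq_zero_of_mem_wedgeDegree_zero hβ (hdeg 0)
    (Witt.leibnizTensor_L_apply_delta_L_zero hβ hcoc (hdeg 1))
end

section
/- The first cohomology group H¹(B₃, ∧²B₃) of the three-dimensional BMS algebra with values in the second exterior power of the adjoint module vanishes. -/
/-!
Work in the coordinates `e_p ⊗ e_q` of `B₃ ⊗ B₃`, where `l₀` acts diagonally with eigenvalue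
`-(wt p + wt q)`. The cocycle identity at `l₀` shows that, after subtracting the coboundary of
`δ l₀` divided by these eigenvalues, `δ` preserves weights. On the Witt algebra a weight-preserving
cocycle consists of four families of finitely supported sequences (for `l ⊗ l`, `l ⊗ T`, `T ⊗ l`,
`T ⊗ T`), each a cocycle of the same shape. Such a cocycle is a coboundary: solve on `l₁` by
recursions from `±∞`, kill the two obstructions where the recursions meet with `l₋₁` and `l_{±2}`,
correct by an `sl₂`-invariant and use that `l_{±1}`, `l₂` generate the Witt algebra. A cocycle
vanishing on the Witt algebra is `l`-equivariant on the `T_m`, which finite support forbids unless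
it vanishes. Finally the antisymmetrisation `½ (r - τ r)` of a solution `r` is again a solution.
-/

open Function TensorProduct

noncomputable section

namespace BMS3

section Recurrence

variable {R : Type*} [CommRing R] [NoZeroDivisors R] {c d f : ℤ → R}

lemma exists_eq_zero_of_lt_natAbs {M : Type*} [Zero M] {f : ℤ → M} (hf : (support f).Finite) :
    ∃ N : ℕ, ∀ i : ℤ, N < i.natAbs → f i = 0 := by
  obtain ⟨N, hN⟩ := (hf.image Int.natAbs).bddAbove
  refine ⟨N, fun i hi => ?_⟩
  by_contra h
  exact absurd (hN ⟨i, h, rfl⟩) (not_le.mpr hi)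

lemma eq_zero_of_recurrence {a : ℤ} (hrec : ∀ i, c i * f (i + 1) + d i * f i = 0)
    (hc : ∀ i, a ≤ i → c i ≠ 0) (hd : ∀ i, i < a → d i ≠ 0) (ha : f a = 0) : f = 0 := by
  funext i
  rcases le_or_gt a i with hi | hi
  · refine Int.leInduction (motive := fun n _ => f n = 0) ha (fun n hn ih => ?_) i hi
    have e := hrec n
    rw [ih, mul_zero, add_zero] at e
    exact (mul_eq_zero.mp e).resolve_left (hc n hn)
  · refine Int.leInductionDown (motive := fun n _ => f n = 0) ha (fun n hn ih => ?_) i hi.le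
    have e := hrec (n - 1)
    rw [sub_add_cancel, ih, mul_zero, zero_add] at e
    exact (mul_eq_zero.mp e).resolve_left (hd _ (by omega))

lemma eq_zero_of_recurrence_of_ge {a : ℤ} (hf : (support f).Finite)
    (hrec : ∀ i, a ≤ i → c i * f (i + 1) + d i * f i = 0) (hd : ∀ i, a ≤ i → d i ≠ 0) :
    ∀ i, a ≤ i → f i = 0 := by
  intro i hi
  by_contra hfi
  -- a nonzero value propagates upwards forever
  have hne : ∀ k : ℕ, f (i + k) ≠ 0 := by
    intro k
    induction k with
    | zero => simpa using hfi
    | succ k ih =>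
      intro h0
      have e := hrec (i + k) (by omega)
      rw [show i + k + 1 = i + (k + 1 : ℕ) by push_cast; ring, h0, mul_zero, zero_add] at e
      exact ih ((mul_eq_zero.mp e).resolve_left (hd _ (by omega)))
  exact Set.infinite_of_injective_forall_mem (f := fun k : ℕ => i + k)
    (fun k l h => by simpa using h) hne hf

lemma eq_zero_of_recurrence_of_le {a : ℤ} (hf : (support f).Finite)
    (hrec : ∀ i, i < a → c i * f (i + 1) + d i * f i = 0) (hc : ∀ i, i < a → c i ≠ 0) :
    ∀ i, i ≤ a → f i = 0 := by
  have hf' : (support fun j => f (-j)).Finite := hf.preimage neg_injective.injOn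
  have h := eq_zero_of_recurrence_of_ge (c := fun j => d (-j - 1)) (d := fun j => c (-j - 1))
    (a := -a) hf' (fun j hj => ?_) (fun j hj => hc _ (by omega))
  · intro i hi
    simpa using h (-i) (by omega)
  · have e := hrec (-j - 1) (by omega)
    rw [show -j - 1 + 1 = -j by ring, show -j - 1 = -(j + 1) by ring] at e
    rw [show -j - 1 = -(j + 1) by ring]
    linear_combination e

variable {K : Type*} [Field K]

/-- `recurrenceSolution c d G M t` is the value at `t - M` of the solution of
`c i * φ (i + 1) + d i * φ i = G i` that vanishes at `-M`. -/
def recurrenceSolution (c d G : ℤ → K) (M : ℤ) : ℕ → K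
  | 0 => 0
  | t + 1 => (G (t - M) - d (t - M) * recurrenceSolution c d G M t) / c (t - M)

lemma exists_recurrence_solution {c d G : ℤ → K} {k : ℤ} (hG : (support G).Finite)
    (hc : ∀ i, i < k → c i ≠ 0) :
    ∃ φ : ℤ → K, (support φ).Finite ∧ (∀ i, k < i → φ i = 0) ∧
      ∀ i, i < k → c i * φ (i + 1) + d i * φ i = G i := by
  obtain ⟨N, hN⟩ := exists_eq_zero_of_lt_natAbs hG
  set M : ℤ := N + k.natAbs with hM
  set s := recurrenceSolution c d G M
  refine ⟨fun i => if i ≤ k then s (i + M).toNat else 0, ?_, fun i hi => if_neg (by omega), ?_⟩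
  · refine (Set.finite_Icc (-M) k).subset fun i hi => ?_
    simp only [mem_support, ne_eq, ite_eq_right_iff, Classical.not_imp] at hi
    refine ⟨?_, hi.1⟩
    by_contra hlt
    exact hi.2 (by rw [show (i + M).toNat = 0 by omega]; rfl)
  · intro i hi
    simp only [if_pos hi.le, if_pos (show i + 1 ≤ k by omega)]
    rcases lt_or_ge (i + M) 0 with hneg | hnn
    · rw [show (i + 1 + M).toNat = 0 by omega, show (i + M).toNat = 0 by omega, hN i (by omega)]
      simp [s, recurrenceSolution]
    · rw [show (i + 1 + M).toNat = (i + M).toNat + 1 by omega]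
      simp only [s, recurrenceSolution]
      rw [show (((i + M).toNat : ℕ) : ℤ) - M = i by omega]
      field_simp [hc i hi]
      ring

end Recurrence

/-- `wittCoboundary φ m i` is the coordinate at `e_i ⊗ e_{m-i}` of `l_m ▷ ∑ₐ φ a • e_a ⊗ e_{-a}`,
where `e` is either of the families `l`, `T`. -/
def wittCoboundary : (ℤ → ℂ) →ₗ[ℂ] ℤ → ℤ → ℂ where
  toFun φ m i := ((2 * m - i : ℤ) : ℂ) * φ (i - m) + ((m + i : ℤ) : ℂ) * φ i
  map_add' φ ψ := by ext m i; simp only [Pi.add_apply]; ring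
  map_smul' a φ := by ext m i; simp only [Pi.smul_apply, smul_eq_mul, RingHom.id_apply]; ring

lemma wittCoboundary_apply (φ : ℤ → ℂ) (m i : ℤ) :
    wittCoboundary φ m i = ((2 * m - i : ℤ) : ℂ) * φ (i - m) + ((m + i : ℤ) : ℂ) * φ i := rfl

lemma finite_support_wittCoboundary {φ : ℤ → ℂ} (hφ : (support φ).Finite) (m : ℤ) :
    (support (wittCoboundary φ m)).Finite := by
  refine ((hφ.preimage (sub_left_injective (b := m)).injOn).union hφ).subset fun i hi => ?_
  by_contra h
  simp only [Set.mem_union, Set.mem_preimage, mem_support, not_or, not_not] at h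
  exact hi (by rw [wittCoboundary_apply, h.1, h.2]; ring)

lemma wittCoboundary_injective : Injective wittCoboundary := by
  refine (injective_iff_map_eq_zero wittCoboundary).mpr fun φ hφ => ?_
  have e : ∀ m i, wittCoboundary φ m i = 0 := fun m i => by rw [hφ]; rfl
  have e10 := e 1 0
  have e11 := e 1 1
  have e21 := e 2 1
  norm_num [wittCoboundary_apply] at e10 e11 e21
  refine eq_zero_of_recurrence (c := fun i => ((2 + i : ℤ) : ℂ)) (d := fun i => ((1 - i : ℤ) : ℂ))
    (a := 0) (fun i => ?_) (fun i hi => Int.cast_ne_zero.mpr (by omega))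
    (fun i hi => Int.cast_ne_zero.mpr (by omega)) (by linear_combination (e10 + e11) / 2 - e21 / 3)
  have e1 := e 1 (i + 1)
  rw [wittCoboundary_apply, add_sub_cancel_right] at e1
  linear_combination (norm := (push_cast; ring1)) e1

lemma exists_wittCoboundary_one_eq_of_le {F : ℤ → ℂ} (hF : (support F).Finite) :
    ∃ φ : ℤ → ℂ, (support φ).Finite ∧ (∀ i, -2 < i → φ i = 0) ∧
      ∀ i, i ≤ -2 → wittCoboundary φ 1 i = F i := by
  obtain ⟨φ, hφ, hφz, hrec⟩ := exists_recurrence_solution (k := -2)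
    (c := fun i => ((2 + i : ℤ) : ℂ)) (d := fun i => ((1 - i : ℤ) : ℂ)) (G := fun i => F (i + 1))
    (hF.preimage (add_left_injective 1).injOn) (fun i hi => Int.cast_ne_zero.mpr (by omega))
  refine ⟨φ, hφ, hφz, fun i hi => ?_⟩
  have e := hrec (i - 1) (by omega)
  rw [sub_add_cancel] at e
  rw [wittCoboundary_apply]
  linear_combination (norm := (push_cast; ring1)) e

/-- At `-1` and `2` a coefficient of the equation vanishes, so the recursions from `±∞` cannot be
glued there. -/
lemma exists_wittCoboundary_one_eq {F : ℤ → ℂ} (hF : (support F).Finite) :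
    ∃ φ : ℤ → ℂ, (support φ).Finite ∧ ∀ i, i ≠ -1 → i ≠ 2 → wittCoboundary φ 1 i = F i := by
  obtain ⟨φ₁, hφ₁, hφ₁z, hφ₁F⟩ := exists_wittCoboundary_one_eq_of_le hF
  -- reflecting `φ` turns the equation at `i` into the equation at `1 - i`
  obtain ⟨φ₂, hφ₂, -, hφ₂F⟩ := exists_wittCoboundary_one_eq_of_le (F := fun i => F (1 - i))
    (hF.preimage (show Injective fun i : ℤ => 1 - i from sub_right_injective).injOn)
  let φ : ℤ → ℂ := fun i =>
    if i ≤ -1 then φ₁ i else if 2 ≤ i then φ₂ (-i) else if i = 0 then F 0 else (F 1 - F 0) / 2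
  refine ⟨φ, ?_, fun i hi1 hi2 => ?_⟩
  · refine ((hφ₁.union (hφ₂.preimage neg_injective.injOn)).union
      (Set.toFinite {0, 1})).subset fun i hi => ?_
    simp only [φ, mem_support] at hi
    split_ifs at hi with _ _ hi0
    · exact Or.inl (Or.inl hi)
    · exact Or.inl (Or.inr hi)
    · exact Or.inr (by simp [hi0])
    · exact Or.inr (by simp only [Set.mem_insert_iff, Set.mem_singleton_iff]; omega)
  rcases le_or_gt i (-2) with h | h
  · rw [← hφ₁F i h, wittCoboundary_apply, wittCoboundary_apply]
    simp only [φ, if_pos (show i - 1 ≤ -1 by omega), if_pos (show i ≤ -1 by omega)]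
  rcases le_or_gt 3 i with h' | h'
  · have e := hφ₂F (1 - i) (by omega)
    rw [wittCoboundary_apply, sub_sub_cancel] at e
    rw [wittCoboundary_apply, ← e]
    simp only [φ, if_neg (show ¬ i - 1 ≤ -1 by omega), if_pos (show 2 ≤ i - 1 by omega),
      if_neg (show ¬ i ≤ -1 by omega), if_pos (show 2 ≤ i by omega)]
    rw [show 1 - i - 1 = -i by ring, neg_sub]
    push_cast
    ring
  obtain rfl | rfl : i = 0 ∨ i = 1 := by omega
  · norm_num [wittCoboundary_apply, φ, hφ₁z (-1) (by norm_num)]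
  · norm_num [wittCoboundary_apply, φ]
    ring

/-- Its tensor `e₋₁ ⊗ e₁ - 2 e₀ ⊗ e₀ + e₁ ⊗ e₋₁` is invariant under `sl₂ = ⟨l₋₁, l₀, l₁⟩`. -/
def sl2Invariant (i : ℤ) : ℂ := if i = 0 then -2 else if i = 1 ∨ i = -1 then 1 else 0

lemma sl2Invariant_eq_zero {i : ℤ} (h : i < -1 ∨ 1 < i) : sl2Invariant i = 0 := by
  rw [sl2Invariant, if_neg (by omega), if_neg (by omega)]

lemma finite_support_sl2Invariant : (support sl2Invariant).Finite :=
  (Set.finite_Icc (-1) 1).subset fun i hi => by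
    by_contra h
    exact hi (sl2Invariant_eq_zero (by simp only [Set.mem_Icc] at h; omega))

lemma wittCoboundary_sl2Invariant_one : wittCoboundary sl2Invariant 1 = 0 := by
  ext i
  rw [wittCoboundary_apply]
  by_cases h : -1 ≤ i ∧ i ≤ 2
  · obtain ⟨h1, h2⟩ := h
    interval_cases i <;> norm_num [sl2Invariant]
  · rw [sl2Invariant_eq_zero (by omega), sl2Invariant_eq_zero (by omega)]
    simp

lemma wittCoboundary_sl2Invariant_neg_one : wittCoboundary sl2Invariant (-1) = 0 := by
  ext i
  rw [wittCoboundary_apply]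
  by_cases h : -2 ≤ i ∧ i ≤ 1
  · obtain ⟨h1, h2⟩ := h
    interval_cases i <;> norm_num [sl2Invariant]
  · rw [sl2Invariant_eq_zero (by omega), sl2Invariant_eq_zero (by omega)]
    simp

lemma wittCoboundary_sl2Invariant_two : wittCoboundary sl2Invariant 2 (-1) = 1 := by
  norm_num [wittCoboundary_apply, sl2Invariant]

/-- The cocycle identity for `m ↦ δ(l_m)` of a weight-preserving cocycle `δ` of the Witt algebra,
read at the coordinate `e_i ⊗ e_{m-i}` of `δ(l_m)`, which is `F m i`. -/
def IsWittCocycle (F : ℤ → ℤ → ℂ) : Prop :=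
  ∀ m n i : ℤ, ((m - n : ℤ) : ℂ) * F (m + n) i =
    ((2 * m - i : ℤ) : ℂ) * F n (i - m) + ((m - n + i : ℤ) : ℂ) * F n i
      - ((2 * n - i : ℤ) : ℂ) * F m (i - n) - ((n - m + i : ℤ) : ℂ) * F m i

lemma isWittCocycle_wittCoboundary (φ : ℤ → ℂ) : IsWittCocycle (wittCoboundary φ) := by
  intro m n i
  simp only [wittCoboundary_apply]
  rw [show i - m - n = i - (m + n) by ring, show i - n - m = i - (m + n) by ring]
  push_cast
  ring

namespace IsWittCocycle

variable {F G : ℤ → ℤ → ℂ}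

lemma sub (hF : IsWittCocycle F) (hG : IsWittCocycle G) : IsWittCocycle (F - G) := by
  intro m n i
  simp only [Pi.sub_apply]
  linear_combination hF m n i - hG m n i

/-- The symmetry coming from the automorphism `l_m ↦ -l_{-m}` of the Witt algebra. -/
lemma reflect (hF : IsWittCocycle F) : IsWittCocycle fun m i => F (-m) (-i) := by
  intro m n i
  have e := hF (-m) (-n) (-i)
  rw [show -m + -n = -(m + n) by ring, show -i - -m = -(i - m) by ring,
    show -i - -n = -(i - n) by ring] at e
  linear_combination (norm := (push_cast; ring1)) -e

lemma apply_zero (hF : IsWittCocycle F) : F 0 = 0 := by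
  apply wittCoboundary_injective
  rw [map_zero]
  ext m i
  have e := hF m 0 i
  simp only [add_zero, sub_zero] at e
  simp only [wittCoboundary_apply, Pi.zero_apply]
  linear_combination (norm := (push_cast; ring1)) -e

lemma relation_one_neg_one (hG : IsWittCocycle G) (j : ℤ) :
    ((3 + j : ℤ) : ℂ) * G (-1) (j + 1) + ((1 - j : ℤ) : ℂ) * G (-1) j
      + ((3 + j : ℤ) : ℂ) * G 1 (j + 2) + ((1 - j : ℤ) : ℂ) * G 1 (j + 1) = 0 := by
  have e := hG 1 (-1) (j + 1)
  rw [show (1 : ℤ) + -1 = 0 by norm_num, hG.apply_zero, Pi.zero_apply, show j + 1 - 1 = j by ring,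
    show j + 1 - -1 = j + 2 by ring] at e
  linear_combination (norm := (push_cast; ring1)) -e

lemma relation_two_neg_one (hG : IsWittCocycle G) (i : ℤ) :
    ((2 + i : ℤ) : ℂ) * G 2 (i + 1) + ((3 - i : ℤ) : ℂ) * G 2 i
      + ((4 - i : ℤ) : ℂ) * G (-1) (i - 2) + ((3 + i : ℤ) : ℂ) * G (-1) i = 3 * G 1 i := by
  have e := hG 2 (-1) i
  rw [show (2 : ℤ) + -1 = 1 by norm_num, show i - -1 = i + 1 by ring] at e
  linear_combination (norm := (push_cast; ring1)) -e

lemma relation_one_neg_two (hG : IsWittCocycle G) (j : ℤ) :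
    ((4 + j : ℤ) : ℂ) * G (-2) (j + 1) + ((1 - j : ℤ) : ℂ) * G (-2) j
      + ((5 + j : ℤ) : ℂ) * G 1 (j + 3) + ((2 - j : ℤ) : ℂ) * G 1 (j + 1) = 3 * G (-1) (j + 1) := by
  have e := hG 1 (-2) (j + 1)
  rw [show (1 : ℤ) + -2 = -1 by norm_num, show j + 1 - 1 = j by ring,
    show j + 1 - -2 = j + 3 by ring] at e
  linear_combination (norm := (push_cast; ring1)) -e

lemma apply_two_eq_zero (hG : IsWittCocycle G) (h1 : G 1 = 0) (hm1 : G (-1) = 0)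
    (h2 : G 2 (-1) = 0) : G 2 = 0 :=
  eq_zero_of_recurrence (a := -1) (c := fun i => ((2 + i : ℤ) : ℂ))
    (d := fun i => ((3 - i : ℤ) : ℂ)) (fun i => by
      have e := hG.relation_two_neg_one i
      simp only [h1, hm1, Pi.zero_apply, mul_zero, add_zero] at e
      exact e)
    (fun i hi => Int.cast_ne_zero.mpr (by omega)) (fun i hi => Int.cast_ne_zero.mpr (by omega)) h2

lemma apply_neg_two_eq_zero (hG : IsWittCocycle G) (h1 : G 1 = 0) (hm1 : G (-1) = 0)
    (h2 : G 2 = 0) : G (-2) = 0 := by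
  have hR := hG.reflect
  have hR1 : (fun m i => G (-m) (-i)) 1 = 0 := by funext i; simp [hm1]
  have hRm1 : (fun m i => G (-m) (-i)) (-1) = 0 := by funext i; simp [h1]
  have r0 := hR.relation_two_neg_one (-1)
  have r1 := hR.relation_two_neg_one 0
  have e := hG 2 (-2) 1
  rw [show (2 : ℤ) + -2 = 0 by norm_num, hG.apply_zero, h2] at e
  norm_num [h1, hm1] at r0 r1 e
  have h : G (-2) 1 = 0 := by
    have : (23 : ℂ) * G (-2) 1 = 0 := by linear_combination 9 / 2 * r0 - 3 / 2 * r1 - e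
    simpa using this
  have := hR.apply_two_eq_zero hR1 hRm1 (by simpa using h)
  funext i
  simpa using congrFun this (-i)

lemma apply_eq_zero_of_two_le (hG : IsWittCocycle G) (h1 : G 1 = 0) (h2 : G 2 = 0) :
    ∀ m, 2 ≤ m → G m = 0 := by
  intro m hm
  induction m, hm using Int.leInduction with
  | base => exact h2
  | succ n hn ih =>
    funext i
    have e := hG 1 n i
    rw [h1, ih, add_comm] at e
    simp only [Pi.zero_apply, mul_zero, sub_zero, add_zero] at e
    exact (mul_eq_zero.mp e).resolve_left (Int.cast_ne_zero.mpr (by omega))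

/-- `l_{±1}` and `l_2` generate the Witt algebra. -/
lemma eq_zero (hG : IsWittCocycle G) (h1 : G 1 = 0) (hm1 : G (-1) = 0) (h2 : G 2 = 0) :
    G = 0 := by
  have hm2 := hG.apply_neg_two_eq_zero h1 hm1 h2
  have hup := hG.apply_eq_zero_of_two_le h1 h2
  have hdown := hG.reflect.apply_eq_zero_of_two_le (by funext i; simp [hm1])
    (by funext i; simp [hm2])
  funext m
  rcases lt_trichotomy m 0 with hm | rfl | hm
  · obtain rfl | hm := eq_or_lt_of_le (show m ≤ -1 by omega)
    · exact hm1
    funext i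
    simpa using congrFun (hdown (-m) (by omega)) (-i)
  · exact hG.apply_zero
  · obtain rfl | hm := eq_or_lt_of_le (show 1 ≤ m by omega)
    · exact h1
    exact hup m hm

lemma apply_neg_one_eq_zero_of_two_le_or_le (hG : IsWittCocycle G)
    (h1 : ∀ i, i ≠ -1 → i ≠ 2 → G 1 i = 0) (hf : (support (G (-1))).Finite) :
    ∀ i, 2 ≤ i ∨ i ≤ -3 → G (-1) i = 0 := by
  have hrec : ∀ j, (2 ≤ j ∨ j < -3) →
      ((3 + j : ℤ) : ℂ) * G (-1) (j + 1) + ((1 - j : ℤ) : ℂ) * G (-1) j = 0 := by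
    intro j hj
    have e := hG.relation_one_neg_one j
    rw [h1 (j + 2) (by omega) (by omega), h1 (j + 1) (by omega) (by omega)] at e
    linear_combination e
  rintro i (hi | hi)
  · exact eq_zero_of_recurrence_of_ge hf (fun j hj => hrec j (.inl hj))
      (fun j hj => Int.cast_ne_zero.mpr (by omega)) i hi
  · exact eq_zero_of_recurrence_of_le hf (fun j hj => hrec j (.inr hj))
      (fun j hj => Int.cast_ne_zero.mpr (by omega)) i hi

lemma apply_neg_one_eq_zero_of_ne (hG : IsWittCocycle G)
    (h1 : ∀ i, i ≠ -1 → i ≠ 2 → G 1 i = 0) (hf : (support (G (-1))).Finite)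
    (hh : (support (G 2)).Finite) :
    ∀ i, i ≠ -1 → i ≠ 0 → G (-1) i = 0 := by
  have hfar := hG.apply_neg_one_eq_zero_of_two_le_or_le h1 hf
  have hrec : ∀ i, (4 ≤ i ∨ i < -2) →
      ((2 + i : ℤ) : ℂ) * G 2 (i + 1) + ((3 - i : ℤ) : ℂ) * G 2 i = 0 := by
    intro i hi
    have e := hG.relation_two_neg_one i
    rw [hfar (i - 2) (by omega), hfar i (by omega), h1 i (by omega) (by omega)] at e
    linear_combination e
  have hup := eq_zero_of_recurrence_of_ge hh (fun i hi => hrec i (.inl hi))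
    (fun i hi => Int.cast_ne_zero.mpr (by omega))
  have hdown := eq_zero_of_recurrence_of_le hh (fun i hi => hrec i (.inr hi))
    (fun i hi => Int.cast_ne_zero.mpr (by omega))
  have e3 := hG.relation_two_neg_one 3
  have em2 := hG.relation_two_neg_one (-2)
  norm_num [hup 4 le_rfl, hdown (-2) le_rfl, hfar 3 (by norm_num), hfar (-4) (by norm_num),
    h1 3 (by norm_num) (by norm_num), h1 (-2) (by norm_num) (by norm_num)] at e3 em2
  intro i him1 hi0
  rcases eq_or_ne i 1 with rfl | hi1
  · exact e3
  rcases eq_or_ne i (-2) with rfl | him2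
  · exact em2
  exact hfar i (by omega)

lemma apply_one_two_eq_zero (hG : IsWittCocycle G)
    (h1 : ∀ i, i ≠ -1 → i ≠ 2 → G 1 i = 0) (hf : (support (G (-1))).Finite)
    (hk : (support (G (-2))).Finite) :
    G 1 2 = 0 := by
  have hfar := hG.apply_neg_one_eq_zero_of_two_le_or_le h1 hf
  have hup := eq_zero_of_recurrence_of_ge hk (a := 2) (c := fun j => ((4 + j : ℤ) : ℂ))
    (d := fun j => ((1 - j : ℤ) : ℂ)) (fun j hj => by
      have e := hG.relation_one_neg_two j
      rw [hfar (j + 1) (by omega), h1 (j + 3) (by omega) (by omega),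
        h1 (j + 1) (by omega) (by omega)] at e
      linear_combination e)
    (fun j hj => Int.cast_ne_zero.mpr (by omega))
  have e := hG.relation_one_neg_two 1
  norm_num [hup 2 le_rfl, hfar 2 (by norm_num), h1 4 (by norm_num) (by norm_num)] at e
  exact e

lemma apply_one_eq_zero_and_apply_neg_one_eq_zero (hG : IsWittCocycle G)
    (h1 : ∀ i, i ≠ -1 → i ≠ 2 → G 1 i = 0) (hf : (support (G (-1))).Finite)
    (hh : (support (G 2)).Finite) (hk : (support (G (-2))).Finite) : G 1 = 0 ∧ G (-1) = 0 := by
  have hw := hG.apply_one_two_eq_zero h1 hf hk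
  have hne := hG.apply_neg_one_eq_zero_of_ne h1 hf hh
  have r0 := hG.relation_one_neg_one 0
  have rm1 := hG.relation_one_neg_one (-1)
  have rm2 := hG.relation_one_neg_one (-2)
  norm_num [hw, hne 1 (by norm_num) (by norm_num), hne (-2) (by norm_num) (by norm_num),
    h1 1 (by norm_num) (by norm_num), h1 0 (by norm_num) (by norm_num)] at r0 rm1 rm2
  have hf0 : G (-1) 0 = 0 := r0
  have hfm1 : G (-1) (-1) = 0 := by simpa [hf0] using rm1
  have hu : G 1 (-1) = 0 := by simpa [hfm1] using rm2
  constructor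
  · funext i
    rcases eq_or_ne i (-1) with rfl | hi1
    · exact hu
    rcases eq_or_ne i 2 with rfl | hi2
    · exact hw
    exact h1 i hi1 hi2
  · funext i
    rcases eq_or_ne i (-1) with rfl | hi1
    · exact hfm1
    rcases eq_or_ne i 0 with rfl | hi0
    · exact hf0
    exact hne i hi1 hi0

theorem exists_eq_wittCoboundary (hF : IsWittCocycle F)
    (hfin : ∀ m, (support (F m)).Finite) :
    ∃ φ : ℤ → ℂ, (support φ).Finite ∧ F = wittCoboundary φ := by
  obtain ⟨φ, hφ, hφF⟩ := exists_wittCoboundary_one_eq (hfin 1)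
  set G := F - wittCoboundary φ
  have hG : IsWittCocycle G := hF.sub (isWittCocycle_wittCoboundary φ)
  have hGfin : ∀ m, (support (G m)).Finite := fun m =>
    ((hfin m).union (finite_support_wittCoboundary hφ m)).subset (support_sub _ _)
  obtain ⟨hG1, hGm1⟩ := hG.apply_one_eq_zero_and_apply_neg_one_eq_zero
    (fun i h1 h2 => by simp [G, hφF i h1 h2]) (hGfin _) (hGfin _) (hGfin _)
  -- now `G 2` is determined by `G 2 (-1)` (see `apply_two_eq_zero`): correct by the invariant
  set H := G - wittCoboundary (G 2 (-1) • sl2Invariant)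
  have hH : IsWittCocycle H := hG.sub (isWittCocycle_wittCoboundary _)
  have hH1 : H 1 = 0 := by simp [H, hG1, wittCoboundary_sl2Invariant_one]
  have hHm1 : H (-1) = 0 := by simp [H, hGm1, wittCoboundary_sl2Invariant_neg_one]
  have hH2 : H 2 = 0 :=
    hH.apply_two_eq_zero hH1 hHm1 (by simp [H, wittCoboundary_sl2Invariant_two])
  refine ⟨φ + G 2 (-1) • sl2Invariant, (hφ.union finite_support_sl2Invariant).subset
    ((support_add _ _).trans (Set.union_subset_union_right _ (support_smul_subset_right _ _))), ?_⟩
  rw [map_add, ← sub_eq_zero, ← sub_sub]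
  exact hH.eq_zero hH1 hHm1 hH2

end IsWittCocycle

/-- The identity `δ ⁅l_m, T_n⁆ = l_m ▷ δ T_n` for a weight-preserving `δ` vanishing on the `l`'s,
read at the coordinate `e_i ⊗ e_{n-i}` of `δ T_n`, which is `R n i`. -/
def IsWittEquivariant (R : ℤ → ℤ → ℂ) : Prop :=
  ∀ m n i : ℤ, ((m - n : ℤ) : ℂ) * R (m + n) i =
    ((2 * m - i : ℤ) : ℂ) * R n (i - m) + ((m - n + i : ℤ) : ℂ) * R n i

lemma IsWittEquivariant.eq_zero {R : ℤ → ℤ → ℂ} (hR : IsWittEquivariant R)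
    (hfin : (support (R 0)).Finite) : R = 0 := by
  have hzero : ∀ m i, ((m : ℤ) : ℂ) * R m i
      = ((2 * m - i : ℤ) : ℂ) * R 0 (i - m) + ((m + i : ℤ) : ℂ) * R 0 i := by
    intro m i
    have e := hR m 0 i
    rw [add_zero] at e
    linear_combination (norm := (push_cast; ring1)) e
  -- `l_m`, `l_{-m}` and their bracket `2m l_0` leave a relation between three values of `R 0`
  have hrel : ∀ m i, ((2 * (m ^ 2 - i ^ 2) : ℤ) : ℂ) * R 0 i
      + (((2 * m - i) ^ 2 : ℤ) : ℂ) * R 0 (i - m)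
      + (((2 * m + i) ^ 2 : ℤ) : ℂ) * R 0 (i + m) = 0 := by
    intro m i
    have e0 := hR m (-m) i
    rw [add_neg_cancel] at e0
    have e1 := hzero (-m) (i - m)
    rw [show i - m - -m = i by ring] at e1
    have e2 := hzero (-m) i
    rw [show i - -m = i + m by ring] at e2
    linear_combination (norm := (push_cast; ring1))
      (-(m : ℂ)) * e0 + ((2 * m - i : ℤ) : ℂ) * e1 + ((2 * m + i : ℤ) : ℂ) * e2
  have h0 : R 0 = 0 := by
    obtain ⟨N, hN⟩ := exists_eq_zero_of_lt_natAbs hfin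
    funext i
    have e := hrel (N + i.natAbs + 1) i
    rw [hN (i - _) (by omega), hN (i + _) (by omega), mul_zero, mul_zero, add_zero, add_zero] at e
    have hlt : i ^ 2 < ((N : ℤ) + i.natAbs + 1) ^ 2 := by
      rw [← Int.natAbs_sq i]
      have hN0 : (0 : ℤ) ≤ N := by positivity
      have hi0 : (0 : ℤ) ≤ i.natAbs := by positivity
      nlinarith
    exact (mul_eq_zero.mp e).resolve_left (Int.cast_ne_zero.mpr (by linarith : (0 : ℤ) < _).ne')
  funext m i
  rcases eq_or_ne m 0 with rfl | hm
  · simp [h0]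
  · have e := hzero m i
    rw [h0] at e
    simp only [Pi.zero_apply, mul_zero, add_zero] at e
    exact (mul_eq_zero.mp e).resolve_left (Int.cast_ne_zero.mpr hm)

def weight : ℤ ⊕ ℤ → ℤ
  | .inl a => a
  | .inr a => a

/-- The basis index of the same kind as `p` (`l` or `T`) and of weight `i`. -/
def withWeight (p : ℤ ⊕ ℤ) (i : ℤ) : ℤ ⊕ ℤ := Sum.map (fun _ => i) (fun _ => i) p

@[simp] lemma weight_withWeight (p : ℤ ⊕ ℤ) (i : ℤ) : weight (withWeight p i) = i := by
  cases p <;> rfl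

@[simp] lemma withWeight_withWeight (p : ℤ ⊕ ℤ) (i j : ℤ) :
    withWeight (withWeight p i) j = withWeight p j := by
  cases p <;> rfl

@[simp] lemma withWeight_weight (p : ℤ ⊕ ℤ) : withWeight p (weight p) = p := by
  cases p <;> rfl

/-- `⁅e_x, e_y⁆ = bracketCoeff x y • e_(bracketIndex x y)` for `l_m = e_(inl m)`,
`T_m = e_(inr m)`. -/
def bracketIndex : ℤ ⊕ ℤ → ℤ ⊕ ℤ → ℤ ⊕ ℤ
  | .inl m, .inl n => .inl (m + n)
  | .inl m, .inr n => .inr (m + n)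
  | .inr m, .inl n => .inr (m + n)
  | .inr m, .inr n => .inr (m + n)

def bracketCoeff : ℤ ⊕ ℤ → ℤ ⊕ ℤ → ℤ
  | .inl m, .inl n => m - n
  | .inl m, .inr n => m - n
  | .inr m, .inl n => m - n
  | .inr _, .inr _ => 0

/-- `e_(preimageIndex x p)` is the only basis vector whose bracket with `e_x` can have an
`e_p`-component, and `actionCoeff x p` is that component (see `bracketCoeff_mul_ite`). -/
def preimageIndex : ℤ ⊕ ℤ → ℤ ⊕ ℤ → ℤ ⊕ ℤ
  | .inl m, p => withWeight p (weight p - m)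
  | .inr m, p => .inl (weight p - m)

def actionCoeff : ℤ ⊕ ℤ → ℤ ⊕ ℤ → ℤ
  | .inl m, p => 2 * m - weight p
  | .inr _, .inl _ => 0
  | .inr m, .inr s => 2 * m - s

lemma bracketCoeff_mul_ite (x a p : ℤ ⊕ ℤ) :
    (bracketCoeff x a : ℂ) * (if bracketIndex x a = p then 1 else 0) =
      (actionCoeff x p : ℂ) * (if a = preimageIndex x p then 1 else 0) := by
  rcases x with m | m <;> rcases a with s | s <;> rcases p with t | t <;>
    simp only [bracketIndex, bracketCoeff, preimageIndex, actionCoeff, weight, withWeight,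
      Sum.map_inl, Sum.map_inr, Sum.inl.injEq, Sum.inr.injEq, reduceCtorEq, ↓reduceIte] <;>
    (try split_ifs) <;> simp only [mul_one, mul_zero, Int.cast_inj, Int.cast_eq_zero, Int.cast_zero,
      eq_comm (a := (0 : ℂ))] <;>
    omega

lemma weight_preimageIndex (x p : ℤ ⊕ ℤ) : weight (preimageIndex x p) = weight p - weight x := by
  rcases x with m | m <;> simp only [preimageIndex, weight_withWeight] <;> rfl

lemma preimageIndex_preimageIndex (x y p : ℤ ⊕ ℤ) :
    preimageIndex y (preimageIndex x p) = preimageIndex (bracketIndex x y) p := by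
  rcases x with m | m <;> rcases y with n | n <;> rcases p with s | s <;>
    simp [preimageIndex, bracketIndex, weight, withWeight] <;> ring

lemma bracketIndex_comm (x y : ℤ ⊕ ℤ) : bracketIndex x y = bracketIndex y x := by
  rcases x with m | m <;> rcases y with n | n <;> simp [bracketIndex, add_comm]

lemma bracketCoeff_mul_actionCoeff (x y p : ℤ ⊕ ℤ) :
    bracketCoeff x y * actionCoeff (bracketIndex x y) p =
      actionCoeff x p * actionCoeff y (preimageIndex x p)
        - actionCoeff y p * actionCoeff x (preimageIndex y p) := by
  rcases x with m | m <;> rcases y with n | n <;> rcases p with s | s <;>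
    simp [bracketCoeff, bracketIndex, actionCoeff, preimageIndex, weight, withWeight] <;> ring

/-- `act r x p q` is the `e_p ⊗ e_q`-coordinate of `e_x ▷ ∑ r a b • e_a ⊗ e_b`
(see `coord_tensorAct`). -/
def act : (ℤ ⊕ ℤ → ℤ ⊕ ℤ → ℂ) →ₗ[ℂ] ℤ ⊕ ℤ → ℤ ⊕ ℤ → ℤ ⊕ ℤ → ℂ where
  toFun r x p q := (actionCoeff x p : ℂ) * r (preimageIndex x p) q
    + (actionCoeff x q : ℂ) * r p (preimageIndex x q)
  map_add' r s := by ext x p q; simp only [Pi.add_apply]; ring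
  map_smul' a r := by ext x p q; simp only [Pi.smul_apply, smul_eq_mul, RingHom.id_apply]; ring

lemma act_apply (r : ℤ ⊕ ℤ → ℤ ⊕ ℤ → ℂ) (x p q : ℤ ⊕ ℤ) :
    act r x p q = (actionCoeff x p : ℂ) * r (preimageIndex x p) q
      + (actionCoeff x q : ℂ) * r p (preimageIndex x q) := rfl

lemma act_inl_zero (r : ℤ ⊕ ℤ → ℤ ⊕ ℤ → ℂ) (p q : ℤ ⊕ ℤ) :
    act r (.inl 0) p q = -((weight p + weight q : ℤ) : ℂ) * r p q := by
  simp only [act_apply, actionCoeff, preimageIndex, sub_zero, withWeight_weight]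
  push_cast
  ring

lemma finite_preimage_preimageIndex (x : ℤ ⊕ ℤ) {s : Set (ℤ ⊕ ℤ)} (hs : s.Finite) :
    (preimageIndex x ⁻¹' s).Finite := by
  refine (hs.biUnion fun a _ => Set.toFinite {Sum.inl (weight a + weight x),
    Sum.inr (weight a + weight x)}).subset fun p hp => Set.mem_biUnion hp ?_
  rw [weight_preimageIndex, sub_add_cancel]
  rcases p with t | t <;> simp [weight]

lemma finite_support_act {r : ℤ ⊕ ℤ → ℤ ⊕ ℤ → ℂ} (hr : (support (uncurry r)).Finite)
    (x : ℤ ⊕ ℤ) : (support (uncurry (act r x))).Finite := by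
  have h₁ := hr.image Prod.fst
  have h₂ := hr.image Prod.snd
  refine (((finite_preimage_preimageIndex x h₁).prod h₂).union
    (h₁.prod (finite_preimage_preimageIndex x h₂))).subset ?_
  rintro ⟨p, q⟩ hpq
  have : r (preimageIndex x p) q ≠ 0 ∨ r p (preimageIndex x q) ≠ 0 := by
    by_contra h
    simp only [ne_eq, not_or, not_not] at h
    exact hpq (by simp [act_apply, h.1, h.2])
  rcases this with h | h
  · exact Or.inl ⟨⟨(preimageIndex x p, q), h, rfl⟩, ⟨(preimageIndex x p, q), h, rfl⟩⟩
  · exact Or.inr ⟨⟨(p, preimageIndex x q), h, rfl⟩, ⟨(p, preimageIndex x q), h, rfl⟩⟩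

section Cocycle

/-- The cocycle identity `δ ⁅e_x, e_y⁆ = e_x ▷ δ e_y - e_y ▷ δ e_x` in coordinates, `D x p q`
being the `e_p ⊗ e_q`-coordinate of `δ e_x`. -/
def IsCocycle (D : ℤ ⊕ ℤ → ℤ ⊕ ℤ → ℤ ⊕ ℤ → ℂ) : Prop :=
  ∀ x y p q, (bracketCoeff x y : ℂ) * D (bracketIndex x y) p q = act (D y) x p q - act (D x) y p q

def IsHomogeneous (D : ℤ ⊕ ℤ → ℤ ⊕ ℤ → ℤ ⊕ ℤ → ℂ) : Prop :=
  ∀ x p q, weight p + weight q ≠ weight x → D x p q = 0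

variable {D E : ℤ ⊕ ℤ → ℤ ⊕ ℤ → ℤ ⊕ ℤ → ℂ}

lemma isCocycle_act (r : ℤ ⊕ ℤ → ℤ ⊕ ℤ → ℂ) : IsCocycle (act r) := by
  intro x y p q
  simp only [act_apply, preimageIndex_preimageIndex]
  rw [bracketIndex_comm y x]
  have h₁ := congrArg (Int.cast : ℤ → ℂ) (bracketCoeff_mul_actionCoeff x y p)
  have h₂ := congrArg (Int.cast : ℤ → ℂ) (bracketCoeff_mul_actionCoeff x y q)
  push_cast at h₁ h₂
  linear_combination r (preimageIndex (bracketIndex x y) p) q * h₁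
    + r p (preimageIndex (bracketIndex x y) q) * h₂

lemma IsCocycle.sub (hD : IsCocycle D) (hE : IsCocycle E) : IsCocycle (D - E) := by
  intro x y p q
  simp only [Pi.sub_apply, map_sub]
  linear_combination hD x y p q - hE x y p q

lemma IsHomogeneous.sub (hD : IsHomogeneous D) (hE : IsHomogeneous E) : IsHomogeneous (D - E) :=
  fun x p q h => by simp [hD x p q h, hE x p q h]

lemma isHomogeneous_act {r : ℤ ⊕ ℤ → ℤ ⊕ ℤ → ℂ} (hr : ∀ p q, weight p + weight q ≠ 0 → r p q = 0) :
    IsHomogeneous (act r) := by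
  intro x p q h
  rw [act_apply, hr _ _ (by rw [weight_preimageIndex]; omega),
    hr _ _ (by rw [weight_preimageIndex]; omega)]
  ring

lemma IsCocycle.weight_mul_eq (hD : IsCocycle D) (x p q : ℤ ⊕ ℤ) :
    ((weight p + weight q - weight x : ℤ) : ℂ) * D x p q = -act (D (.inl 0)) x p q := by
  have e := hD (.inl 0) x p q
  have hb : bracketIndex (.inl 0) x = x := by cases x <;> simp [bracketIndex]
  have hc : bracketCoeff (.inl 0) x = -weight x := by cases x <;> simp [bracketCoeff, weight]
  rw [act_inl_zero, hb, hc] at e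
  linear_combination (norm := (push_cast; ring1)) e

lemma IsCocycle.exists_isHomogeneous_sub_act (hD : IsCocycle D)
    (hfin : (support (uncurry (D (.inl 0)))).Finite) :
    ∃ r : ℤ ⊕ ℤ → ℤ ⊕ ℤ → ℂ, (support (uncurry r)).Finite ∧ IsHomogeneous (D - act r) := by
  -- divide `δ l₀` by the `l₀`-eigenvalue; at eigenvalue `0` the junk value `0⁻¹ = 0` is harmless
  refine ⟨fun p q => -((weight p + weight q : ℤ) : ℂ)⁻¹ * D (.inl 0) p q,
    hfin.subset fun pq h => right_ne_zero_of_mul h, fun x p q hw => ?_⟩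
  have hk : ((weight p + weight q - weight x : ℤ) : ℂ) ≠ 0 :=
    Int.cast_ne_zero.mpr (sub_ne_zero.mpr hw)
  have hDx : D x p q =
      -(((weight p + weight q - weight x : ℤ) : ℂ)⁻¹ * act (D (.inl 0)) x p q) := by
    rw [← neg_neg (act (D (.inl 0)) x p q), ← hD.weight_mul_eq, mul_neg, neg_neg,
      inv_mul_cancel_left₀ hk]
  simp only [Pi.sub_apply, hDx, act_apply, weight_preimageIndex]
  rw [show weight p - weight x + weight q = weight p + weight q - weight x by ring,
    show weight p + (weight q - weight x) = weight p + weight q - weight x by ring]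
  ring

/-- The coordinates of `δ (x m)` at `e_i ⊗ e'_{m-i}`, where `e`, `e'` are the kinds of `p`, `q`. -/
def slice (D : ℤ ⊕ ℤ → ℤ ⊕ ℤ → ℤ ⊕ ℤ → ℂ) (x : ℤ → ℤ ⊕ ℤ) (p q : ℤ ⊕ ℤ) (m i : ℤ) : ℂ :=
  D (x m) (withWeight p i) (withWeight q (m - i))

lemma finite_support_slice {x : ℤ → ℤ ⊕ ℤ} {m : ℤ} (hfin : (support (uncurry (D (x m)))).Finite)
    (p q : ℤ ⊕ ℤ) : (support (slice D x p q m)).Finite :=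
  hfin.preimage (f := fun i => (withWeight p i, withWeight q (m - i)))
    fun i _ j _ h => by simpa using congrArg (fun z => weight z.1) h

lemma IsCocycle.isWittCocycle_slice (hD : IsCocycle D) (p q : ℤ ⊕ ℤ) :
    IsWittCocycle (slice D .inl p q) := by
  intro m n i
  have e := hD (.inl m) (.inl n) (withWeight p i) (withWeight q (m + n - i))
  simp only [bracketCoeff, bracketIndex, act_apply, actionCoeff, preimageIndex, weight_withWeight,
    withWeight_withWeight] at e
  rw [show m + n - i - m = n - i by ring, show m + n - i - n = m - i by ring] at e
  simp only [slice]
  rw [show n - (i - m) = m + n - i by ring, show m - (i - n) = m + n - i by ring]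
  linear_combination (norm := (push_cast; ring1)) e

lemma IsCocycle.isWittEquivariant_slice (hD : IsCocycle D) (hl : ∀ m, D (.inl m) = 0)
    (p q : ℤ ⊕ ℤ) : IsWittEquivariant (slice D .inr p q) := by
  intro m n i
  have e := hD (.inl m) (.inr n) (withWeight p i) (withWeight q (m + n - i))
  rw [hl m, map_zero] at e
  simp only [bracketCoeff, bracketIndex, act_apply, actionCoeff, preimageIndex, weight_withWeight,
    withWeight_withWeight, Pi.zero_apply, sub_zero] at e
  rw [show m + n - i - m = n - i by ring] at e
  simp only [slice]
  rw [show n - (i - m) = m + n - i by ring]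
  linear_combination (norm := (push_cast; ring1)) e

lemma IsCocycle.eq_zero_of_isHomogeneous (hD : IsCocycle D) (hh : IsHomogeneous D)
    (hl : ∀ m, D (.inl m) = 0) (hfin : (support (uncurry (D (.inr 0)))).Finite) : D = 0 := by
  funext x p q
  by_cases hw : weight p + weight q = weight x
  · rcases x with m | m
    · simp [hl m]
    · have h := (hD.isWittEquivariant_slice hl p q).eq_zero
        (finite_support_slice (x := Sum.inr) (m := 0) hfin p q)
      have hw' : weight p + weight q = m := hw
      have := congrFun (congrFun h m) (weight p)
      simp only [slice, withWeight_weight, show m - weight p = weight q by omega,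
        Pi.zero_apply] at this
      exact this
  · exact hh _ p q hw

/-- The weight-zero tensor `∑ φ e e' a • e_a ⊗ e'_{-a}`, summed over `a` and over the kinds
`e`, `e'` (`l` or `T`), which are represented by their members `withWeight · 0` of weight zero. -/
def diagonal (φ : ℤ ⊕ ℤ → ℤ ⊕ ℤ → ℤ → ℂ) (p q : ℤ ⊕ ℤ) : ℂ :=
  if weight p + weight q = 0 then φ (withWeight p 0) (withWeight q 0) (weight p) else 0

lemma finite_support_diagonal {φ : ℤ ⊕ ℤ → ℤ ⊕ ℤ → ℤ → ℂ} (hφ : ∀ p q, (support (φ p q)).Finite) :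
    (support (uncurry (diagonal φ))).Finite := by
  let S : Set (ℤ ⊕ ℤ) := {.inl 0, .inr 0}
  refine ((Set.toFinite S).biUnion fun p₀ _ => (Set.toFinite S).biUnion fun q₀ _ =>
    (hφ p₀ q₀).image fun i => (withWeight p₀ i, withWeight q₀ (-i))).subset ?_
  rintro ⟨p, q⟩ hpq
  simp only [mem_support, uncurry_apply_pair, diagonal, ne_eq, ite_eq_right_iff,
    Classical.not_imp] at hpq
  obtain ⟨hw, hne⟩ := hpq
  refine Set.mem_biUnion (x := withWeight p 0) ?_
    (Set.mem_biUnion (x := withWeight q 0) ?_ ⟨weight p, hne, ?_⟩)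
  · cases p <;> simp [S, withWeight]
  · cases q <;> simp [S, withWeight]
  · simp [show -weight p = weight q by omega]

lemma isHomogeneous_act_diagonal (φ : ℤ ⊕ ℤ → ℤ ⊕ ℤ → ℤ → ℂ) : IsHomogeneous (act (diagonal φ)) :=
  isHomogeneous_act fun _ _ h => if_neg h

lemma act_diagonal_inl (φ : ℤ ⊕ ℤ → ℤ ⊕ ℤ → ℤ → ℂ) {m : ℤ} {p q : ℤ ⊕ ℤ}
    (hw : weight p + weight q = m) :
    act (diagonal φ) (.inl m) p q =
      wittCoboundary (φ (withWeight p 0) (withWeight q 0)) m (weight p) := by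
  have hq : weight q = m - weight p := by omega
  simp only [act_apply, diagonal, actionCoeff, preimageIndex, weight_withWeight,
    withWeight_withWeight, wittCoboundary_apply]
  rw [if_pos (by omega), if_pos (by omega), hq]
  push_cast
  ring

lemma IsCocycle.exists_eq_act_of_isHomogeneous (hD : IsCocycle D) (hh : IsHomogeneous D)
    (hfin : ∀ x, (support (uncurry (D x))).Finite) :
    ∃ r : ℤ ⊕ ℤ → ℤ ⊕ ℤ → ℂ, (support (uncurry r)).Finite ∧ D = act r := by
  choose φ hφfin hφ using fun p q => (hD.isWittCocycle_slice p q).exists_eq_wittCoboundary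
    fun m => finite_support_slice (x := Sum.inl) (hfin _) p q
  have hr := finite_support_diagonal hφfin
  refine ⟨diagonal φ, hr, sub_eq_zero.mp ((hD.sub (isCocycle_act _)).eq_zero_of_isHomogeneous
    (hh.sub (isHomogeneous_act_diagonal φ)) (fun m => ?_)
    (((hfin _).union (finite_support_act hr _)).subset (support_sub _ _)))⟩
  funext p q
  by_cases hw : weight p + weight q = m
  · have h := congrFun (congrFun (hφ (withWeight p 0) (withWeight q 0)) m) (weight p)
    simp only [slice, withWeight_withWeight, withWeight_weight,
      show m - weight p = weight q by omega] at h
    simp [h, act_diagonal_inl φ hw]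
  · have hw' : weight p + weight q ≠ weight (.inl m) := hw
    simp [hh _ p q hw', isHomogeneous_act_diagonal φ _ p q hw']

theorem IsCocycle.exists_eq_act (hD : IsCocycle D) (hfin : ∀ x, (support (uncurry (D x))).Finite) :
    ∃ r : ℤ ⊕ ℤ → ℤ ⊕ ℤ → ℂ, (support (uncurry r)).Finite ∧ D = act r := by
  obtain ⟨r₁, hr₁, hh⟩ := hD.exists_isHomogeneous_sub_act (hfin _)
  obtain ⟨r₂, hr₂, h⟩ := (hD.sub (isCocycle_act r₁)).exists_eq_act_of_isHomogeneous hh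
    fun x => ((hfin x).union (finite_support_act hr₁ x)).subset (support_sub _ _)
  refine ⟨r₁ + r₂, (hr₁.union hr₂).subset (support_add (uncurry r₁) (uncurry r₂)), ?_⟩
  rw [map_add, ← h, add_sub_cancel]

end Cocycle

section TensorAct

variable {R : Type*} [CommRing R] {M : Type*} [AddCommGroup M] [Module R M]

def tensorAct (β : M →ₗ[R] M →ₗ[R] M) : M →ₗ[R] Module.End R (M ⊗[R] M) :=
  LinearMap.rTensorHom M ∘ₗ β + LinearMap.lTensorHom M ∘ₗ β

lemma tensorAct_apply (β : M →ₗ[R] M →ₗ[R] M) (x : M) :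
    tensorAct β x = LinearMap.rTensor M (β x) + LinearMap.lTensor M (β x) := rfl

lemma comm_tensorAct (β : M →ₗ[R] M →ₗ[R] M) (x : M) (u : M ⊗[R] M) :
    TensorProduct.comm R M M (tensorAct β x u) = tensorAct β x (TensorProduct.comm R M M u) := by
  simp only [tensorAct_apply, LinearMap.add_apply, map_add, LinearMap.rTensor_comm,
    LinearMap.lTensor_comm, add_comm]

lemma exists_comm_eq_neg_of_eq_tensorAct [Invertible (2 : R)] {β : M →ₗ[R] M →ₗ[R] M}
    {δ : M →ₗ[R] M ⊗[R] M} (hδ : ∀ x, TensorProduct.comm R M M (δ x) = -δ x) {u : M ⊗[R] M}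
    (hu : ∀ x, δ x = tensorAct β x u) :
    ∃ r, TensorProduct.comm R M M r = -r ∧ ∀ x, δ x = tensorAct β x r := by
  refine ⟨(⅟2 : R) • (u - TensorProduct.comm R M M u), ?_, fun x => ?_⟩
  · rw [map_smul, map_sub, TensorProduct.comm_comm, ← smul_neg, neg_sub]
  · have h := hδ x
    rw [hu, comm_tensorAct] at h
    rw [map_smul, map_sub, h, sub_neg_eq_add, smul_add, invOf_two_smul_add_invOf_two_smul, hu]

end TensorAct

section Coordinates

variable {g : Type*} [AddCommGroup g] [Module ℂ g] (L : Module.Basis (ℤ ⊕ ℤ) ℂ g)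

def coord (p q : ℤ ⊕ ℤ) : g ⊗[ℂ] g →ₗ[ℂ] ℂ := (L.tensorProduct L).coord (p, q)

lemma coord_tmul (p q a b : ℤ ⊕ ℤ) :
    coord L p q (L a ⊗ₜ L b) = (if a = p then 1 else 0) * (if b = q then 1 else 0) := by
  simp only [coord, Module.Basis.coord_apply, Module.Basis.tensorProduct_repr_tmul_apply,
    Module.Basis.repr_self, smul_eq_mul, Finsupp.single_apply]
  ring

lemma ext_coord {u v : g ⊗[ℂ] g} (h : ∀ p q, coord L p q u = coord L p q v) : u = v :=
  (L.tensorProduct L).ext_elem fun pq => h pq.1 pq.2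

lemma finite_support_coord (u : g ⊗[ℂ] g) : (support (uncurry fun p q => coord L p q u)).Finite :=
  ((L.tensorProduct L).repr u).hasFiniteSupport

lemma exists_coord_eq {r : ℤ ⊕ ℤ → ℤ ⊕ ℤ → ℂ} (hr : (support (uncurry r)).Finite) :
    ∃ u : g ⊗[ℂ] g, ∀ p q, coord L p q u = r p q :=
  ⟨(L.tensorProduct L).repr.symm (Finsupp.ofSupportFinite _ hr), fun p q => by
    simp [coord, Finsupp.ofSupportFinite_coe]⟩

lemma coord_tensorAct {β : g →ₗ[ℂ] g →ₗ[ℂ] g}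
    (hβ : ∀ a b, β (L a) (L b) = (bracketCoeff a b : ℂ) • L (bracketIndex a b))
    (x p q : ℤ ⊕ ℤ) (u : g ⊗[ℂ] g) :
    coord L p q (tensorAct β (L x) u) = act (fun p q => coord L p q u) x p q := by
  have h : coord L p q ∘ₗ tensorAct β (L x) = (actionCoeff x p : ℂ) • coord L (preimageIndex x p) q
      + (actionCoeff x q : ℂ) • coord L p (preimageIndex x q) := by
    refine (L.tensorProduct L).ext fun ⟨a, b⟩ => ?_
    simp only [Module.Basis.tensorProduct_apply, LinearMap.comp_apply, tensorAct_apply,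
      LinearMap.add_apply, LinearMap.rTensor_tmul, LinearMap.lTensor_tmul, LinearMap.smul_apply,
      hβ, ← TensorProduct.smul_tmul', TensorProduct.tmul_smul, map_add, map_smul, coord_tmul,
      smul_eq_mul]
    linear_combination (if b = q then (1 : ℂ) else 0) * bracketCoeff_mul_ite x a p
      + (if a = p then (1 : ℂ) else 0) * bracketCoeff_mul_ite x b q
  exact LinearMap.congr_fun h u

end Coordinates

end BMS3

end

open BMS3

/-- `H¹(B₃, ∧²B₃) = 0` for the three-dimensional BMS algebra: basis `l_m = L (.inl m)`
(superrotations) and `T_m = L (.inr m)` (supertranslations), brackets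
`⁅l_m, l_n⁆ = (m-n) l_{m+n}`, `⁅l_m, T_n⁆ = (m-n) T_{m+n}`, `⁅T_m, T_n⁆ = 0`;
every 1-cocycle with values in the second exterior power of the adjoint module
is a coboundary. -/
theorem bms3_H1_wedge_two_vanishes
    (g : Type) [AddCommGroup g] [Module ℂ g]
    (L : Module.Basis (ℤ ⊕ ℤ) ℂ g)
    (β : g →ₗ[ℂ] g →ₗ[ℂ] g)
    (hll : ∀ m n : ℤ, β (L (.inl m)) (L (.inl n)) = ((m - n : ℤ) : ℂ) • L (.inl (m + n)))
    (hlT : ∀ m n : ℤ, β (L (.inl m)) (L (.inr n)) = ((m - n : ℤ) : ℂ) • L (.inr (m + n)))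
    (hTl : ∀ m n : ℤ, β (L (.inr m)) (L (.inl n)) = ((m - n : ℤ) : ℂ) • L (.inr (m + n)))
    (hTT : ∀ m n : ℤ, β (L (.inr m)) (L (.inr n)) = 0)
    (δ : g →ₗ[ℂ] g ⊗[ℂ] g)
    (hδanti : ∀ x : g, TensorProduct.comm ℂ g g (δ x) = -(δ x))
    (hcoc : ∀ x y : g, δ (β x y)
        = (LinearMap.rTensor g (β x) + LinearMap.lTensor g (β x)) (δ y)
        - (LinearMap.rTensor g (β y) + LinearMap.lTensor g (β y)) (δ x)) :
    ∃ r : g ⊗[ℂ] g, TensorProduct.comm ℂ g g r = -r ∧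
      ∀ x : g, δ x = (LinearMap.rTensor g (β x) + LinearMap.lTensor g (β x)) r := by
  have hβ : ∀ a b, β (L a) (L b) = (bracketCoeff a b : ℂ) • L (bracketIndex a b) := by
    rintro (m | m) (n | n) <;> simp [hll, hlT, hTl, hTT, bracketCoeff, bracketIndex]
  have hD : IsCocycle fun x p q => coord L p q (δ (L x)) := by
    intro x y p q
    have e := congrArg (coord L p q) (hcoc (L x) (L y))
    rw [hβ, map_smul, map_smul, smul_eq_mul, map_sub] at e
    simpa only [← tensorAct_apply, coord_tensorAct L hβ] using e
  obtain ⟨r, hr, hDr⟩ := hD.exists_eq_act fun x => finite_support_coord L _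
  obtain ⟨u, hu⟩ := exists_coord_eq L hr
  have hδu : δ = (tensorAct β).flip u := L.ext fun i => ext_coord L fun p q => by
    rw [LinearMap.flip_apply, coord_tensorAct L hβ, show (fun p q => coord L p q u) = r from
      funext₂ hu, ← hDr]
  exact exists_comm_eq_neg_of_eq_tensorAct hδanti fun x => by rw [hδu]; rfl
end

section
/- The map δ_α defined on the centrally extended 3D BMS algebra B₃ᶜ by δ_α(l_m) = 0, δ_α(c) = 0, δ_α(T_m) = α c ∧ T_m is a 1-cocycle with values in ∧²B₃ᶜ, and it is not a coboundary. -/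
/-!
Since `c` is central, the Leibniz action satisfies `x ▷ (c ∧ y) = c ∧ [x, y]`, so on basis pairs
the cocycle identity is immediate except for the mixed brackets `[l_m, T_n]`, whose central term
is killed by `c ∧ c = 0`.

`ad T₀` maps `B₃ᶜ` into the span of the `T_n` with `n ≠ 0`, so the functional `c* ⊗ T₀*` vanishes
on `T₀ ▷ r` for every `r`; but it takes the value `α` on `δ_α(T₀) = α c ∧ T₀`.
-/

open TensorProduct LinearMap Module

namespace Cobracket

variable {R M : Type*} [CommRing R] [AddCommGroup M] [Module R M]

def tensorAd (β : M →ₗ[R] M →ₗ[R] M) : M →ₗ[R] Module.End R (M ⊗[R] M) :=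
  (rTensorHom M + lTensorHom M) ∘ₗ β

def IsCocycle (β : M →ₗ[R] M →ₗ[R] M) (δ : M →ₗ[R] M ⊗[R] M) : Prop :=
  ∀ x y, δ (β x y) = tensorAd β x (δ y) - tensorAd β y (δ x)

def IsCoboundary (β : M →ₗ[R] M →ₗ[R] M) (δ : M →ₗ[R] M ⊗[R] M) : Prop :=
  ∃ r : M ⊗[R] M, TensorProduct.comm R M M r = -r ∧ ∀ x, δ x = tensorAd β x r

variable (R) in
def wedge : M →ₗ[R] M →ₗ[R] M ⊗[R] M := mk R M M - (mk R M M).flip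

@[simp] theorem wedge_apply (a b : M) : wedge R a b = a ⊗ₜ b - b ⊗ₜ a := rfl

@[simp] theorem wedge_self (a : M) : wedge R a a = 0 := sub_self (a ⊗ₜ a)

variable {β : M →ₗ[R] M →ₗ[R] M}

@[simp] theorem tensorAd_tmul (x a b : M) :
    tensorAd β x (a ⊗ₜ b) = β x a ⊗ₜ b + a ⊗ₜ β x b := rfl

theorem tensorAd_wedge (x a b : M) :
    tensorAd β x (wedge R a b) = wedge R (β x a) b + wedge R a (β x b) := by
  simp only [wedge_apply, map_sub, tensorAd_tmul]
  abel

theorem tensorAd_wedge_of_central {c : M} (hc : ∀ x, β x c = 0) (x y : M) :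
    tensorAd β x (wedge R c y) = wedge R c (β x y) := by
  rw [tensorAd_wedge, hc, map_zero, LinearMap.zero_apply, zero_add]

theorem isCocycle_of_basis {ι : Type*} (b : Basis ι R M) {δ : M →ₗ[R] M ⊗[R] M}
    (h : ∀ i j, δ (β (b i) (b j)) = tensorAd β (b i) (δ (b j)) - tensorAd β (b j) (δ (b i))) :
    IsCocycle β δ := by
  have key : β.compr₂ δ = (tensorAd β).compl₂ δ - ((tensorAd β).compl₂ δ).flip :=
    ext_basis b b fun i j => h i j
  intro x y
  exact congr($key x y)

theorem dualDistrib_tensorAd_eq_zero {x : M} {f f' : Dual R M} (hf : ∀ y, f (β x y) = 0)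
    (hf' : ∀ y, f' (β x y) = 0) (t : M ⊗[R] M) :
    dualDistrib R M M (f ⊗ₜ f') (tensorAd β x t) = 0 := by
  induction t using TensorProduct.induction_on with
  | zero => simp
  | tmul a b => simp [hf, hf']
  | add s t hs ht => rw [map_add, map_add, hs, ht, add_zero]

theorem not_isCoboundary_of_dualDistrib_ne_zero {δ : M →ₗ[R] M ⊗[R] M} {x : M}
    {f f' : Dual R M} (hf : ∀ y, f (β x y) = 0) (hf' : ∀ y, f' (β x y) = 0)
    (hδ : dualDistrib R M M (f ⊗ₜ f') (δ x) ≠ 0) : ¬ IsCoboundary β δ := by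
  rintro ⟨r, -, hr⟩
  exact hδ (by rw [hr, dualDistrib_tensorAd_eq_zero hf hf'])

end Cobracket

namespace BMS3c

open Cobracket

variable {g : Type} [AddCommGroup g] [Module ℂ g] {L : Basis ((ℤ ⊕ ℤ) ⊕ Unit) ℂ g}
  {β : g →ₗ[ℂ] g →ₗ[ℂ] g}

theorem isCocycle_delta
    (hll : ∀ m n : ℤ, β (L (.inl (.inl m))) (L (.inl (.inl n))) =
      ((m - n : ℤ) : ℂ) • L (.inl (.inl (m + n))))
    (hlT : ∀ m n : ℤ, β (L (.inl (.inl m))) (L (.inl (.inr n))) =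
      ((m - n : ℤ) : ℂ) • L (.inl (.inr (m + n))) +
      (if m + n = 0 then ((m ^ 3 - m : ℤ) : ℂ) • L (.inr ()) else 0))
    (hTl : ∀ m n : ℤ, β (L (.inl (.inr m))) (L (.inl (.inl n))) =
      ((m - n : ℤ) : ℂ) • L (.inl (.inr (m + n))) +
      (if m + n = 0 then ((m ^ 3 - m : ℤ) : ℂ) • L (.inr ()) else 0))
    (hTT : ∀ m n : ℤ, β (L (.inl (.inr m))) (L (.inl (.inr n))) = 0)
    (hcl : ∀ x : g, β (L (.inr ())) x = 0)
    (hcr : ∀ x : g, β x (L (.inr ())) = 0)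
    {α : ℂ} {δ : g →ₗ[ℂ] g ⊗[ℂ] g}
    (hδl : ∀ m : ℤ, δ (L (.inl (.inl m))) = 0)
    (hδT : ∀ m : ℤ, δ (L (.inl (.inr m))) = α • wedge ℂ (L (.inr ())) (L (.inl (.inr m))))
    (hδc : δ (L (.inr ())) = 0) :
    IsCocycle β δ := by
  refine isCocycle_of_basis L fun i j => ?_
  rcases i with (m | m) | ⟨⟩ <;> rcases j with (n | n) | ⟨⟩ <;>
    simp only [hll, hlT, hTl, hTT, hcl, hcr, hδl, hδT, hδc, map_add, map_smul, map_zero,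
      tensorAd_wedge_of_central hcr, smul_zero, sub_zero, zero_sub, sub_self]
  -- only the pairs `(l_m, T_n)` and `(T_m, l_n)` remain
  all_goals
    rw [apply_ite δ, apply_ite (wedge ℂ (L (.inr ())))]
    try rw [add_comm n m]
    split_ifs <;> simp only [map_smul, map_zero, hδc, wedge_self, smul_zero, add_zero] <;> module

theorem coord_bracket_T_zero_eq_zero
    (hTl : ∀ m n : ℤ, β (L (.inl (.inr m))) (L (.inl (.inl n))) =
      ((m - n : ℤ) : ℂ) • L (.inl (.inr (m + n))) +
      (if m + n = 0 then ((m ^ 3 - m : ℤ) : ℂ) • L (.inr ()) else 0))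
    (hTT : ∀ m n : ℤ, β (L (.inl (.inr m))) (L (.inl (.inr n))) = 0)
    (hcr : ∀ x : g, β x (L (.inr ())) = 0)
    {i : (ℤ ⊕ ℤ) ⊕ Unit} (hi : ∀ n ≠ 0, i ≠ .inl (.inr n)) (y : g) :
    L.coord i (β (L (.inl (.inr 0))) y) = 0 := by
  suffices L.coord i ∘ₗ β (L (.inl (.inr 0))) = 0 from congr($this y)
  refine L.ext fun j => ?_
  rcases j with (n | n) | ⟨⟩
  · rcases eq_or_ne n 0 with rfl | hn
    · simp [hTl]
    · simp [hTl, hn, (hi n hn).symm]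
  · simp [hTT]
  · simp [hcr]

end BMS3c

open Cobracket BMS3c

/-- The map `δ_α` on the centrally extended 3D BMS algebra `B₃ᶜ` defined by
`δ_α(l_m) = 0`, `δ_α(c) = 0`, `δ_α(T_m) = α c ∧ T_m` (with `α ≠ 0`) is a 1-cocycle
with values in `∧²B₃ᶜ` and is not a coboundary.
Basis: `l_m = L (.inl (.inl m))`, `T_m = L (.inl (.inr m))`, `c = L (.inr ())`. -/
theorem bms3c_delta_alpha_cocycle_not_coboundary
    (g : Type) [AddCommGroup g] [Module ℂ g]
    (L : Module.Basis ((ℤ ⊕ ℤ) ⊕ Unit) ℂ g)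
    (β : g →ₗ[ℂ] g →ₗ[ℂ] g)
    (hll : ∀ m n : ℤ, β (L (.inl (.inl m))) (L (.inl (.inl n))) =
      ((m - n : ℤ) : ℂ) • L (.inl (.inl (m + n))))
    (hlT : ∀ m n : ℤ, β (L (.inl (.inl m))) (L (.inl (.inr n))) =
      ((m - n : ℤ) : ℂ) • L (.inl (.inr (m + n))) +
      (if m + n = 0 then ((m ^ 3 - m : ℤ) : ℂ) • L (.inr ()) else 0))
    (hTl : ∀ m n : ℤ, β (L (.inl (.inr m))) (L (.inl (.inl n))) =
      ((m - n : ℤ) : ℂ) • L (.inl (.inr (m + n))) +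
      (if m + n = 0 then ((m ^ 3 - m : ℤ) : ℂ) • L (.inr ()) else 0))
    (hTT : ∀ m n : ℤ, β (L (.inl (.inr m))) (L (.inl (.inr n))) = 0)
    (hcl : ∀ x : g, β (L (.inr ())) x = 0)
    (hcr : ∀ x : g, β x (L (.inr ())) = 0)
    (α : ℂ) (hα : α ≠ 0)
    (δα : g →ₗ[ℂ] g ⊗[ℂ] g)
    (hδαl : ∀ m : ℤ, δα (L (.inl (.inl m))) = 0)
    (hδαT : ∀ m : ℤ, δα (L (.inl (.inr m))) =
      α • (L (.inr ()) ⊗ₜ[ℂ] L (.inl (.inr m)) - L (.inl (.inr m)) ⊗ₜ[ℂ] L (.inr ())))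
    (hδαc : δα (L (.inr ())) = 0) :
    (∀ x y : g, δα (β x y)
        = (LinearMap.rTensor g (β x) + LinearMap.lTensor g (β x)) (δα y)
        - (LinearMap.rTensor g (β y) + LinearMap.lTensor g (β y)) (δα x)) ∧
    (¬ ∃ r : g ⊗[ℂ] g, TensorProduct.comm ℂ g g r = -r ∧
      ∀ x : g, δα x = (LinearMap.rTensor g (β x) + LinearMap.lTensor g (β x)) r) := by
  refine ⟨isCocycle_delta hll hlT hTl hTT hcl hcr hδαl hδαT hδαc, ?_⟩
  refine not_isCoboundary_of_dualDistrib_ne_zero (x := L (.inl (.inr 0)))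
    (coord_bracket_T_zero_eq_zero hTl hTT hcr (i := .inr ()) (by simp))
    (coord_bracket_T_zero_eq_zero hTl hTT hcr (i := .inl (.inr 0)) fun n hn => by simpa using hn.symm) ?_
  simp [hδαT, hα]
end

section
/- An element r ∈ ∧²g of a Lie algebra g defines a coboundary Lie bialgebra via δ_r(x) = [x ⊗ 1 + 1 ⊗ x, r] if and only if the Schouten bracket [[r,r]] = [r₁₂, r₁₃] + [r₁₂, r₂₃] + [r₁₃, r₂₃] is ad-invariant; this follows from the identity Cycl((δ_r ⊗ id) ∘ δ_r (x)) + [x ⊗ 1 ⊗ 1 + 1 ⊗ x ⊗ 1 + 1 ⊗ 1 ⊗ x, [[r,r]]] = 0 for all x ∈ g. -/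
/-!
Fix `x` and polarize the left side of the identity in `r`: it is the diagonal value `D(r, r)` of
the bilinear form `D(p, q) = Cycl((δ_p ⊗ id)(δ_q x)) + x · [[p, q]]` (`cojacobiForm`, with
`δ_p = coboundary p`). On antisymmetrized pure tensors `p = a ⊗ b - b ⊗ a`, `q = c ⊗ d - d ⊗ c`
the symmetrization `D(p, q) + D(q, p)` vanishes by the Jacobi identity alone, hence it vanishes on
all antisymmetrized tensors. An antisymmetric `r` is half of its antisymmetrization, so
`8 D(r, r) = 0`. The equivalence follows because the two summands of the identity are then
negatives of each other.
-/

open TensorProduct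

namespace LieAlgebra

variable {R L : Type*} [CommRing R] [LieRing L] [LieAlgebra R L]

variable (R L) in
def coboundary (M : Type*) [AddCommGroup M] [Module R M] [LieRingModule L M] [LieModule R L M] :
    M →ₗ[R] L →ₗ[R] M :=
  (LieModule.toEnd R L M : L →ₗ[R] Module.End R M).flip

@[simp]
theorem coboundary_apply {M : Type*} [AddCommGroup M] [Module R M] [LieRingModule L M]
    [LieModule R L M] (m : M) (y : L) : coboundary R L M m y = ⁅y, m⁆ := rfl

variable (cyc : L ⊗[R] (L ⊗[R] L) →ₗ[R] L ⊗[R] (L ⊗[R] L))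
  (S : L ⊗[R] L →ₗ[R] L ⊗[R] L →ₗ[R] L ⊗[R] (L ⊗[R] L))

def IsCyclicSum : Prop :=
  ∀ a b c : L, cyc (a ⊗ₜ (b ⊗ₜ c)) = a ⊗ₜ (b ⊗ₜ c) + c ⊗ₜ (a ⊗ₜ b) + b ⊗ₜ (c ⊗ₜ a)

def IsSchoutenBracket : Prop :=
  ∀ a b c d : L, S (a ⊗ₜ b) (c ⊗ₜ d) = ⁅a, c⁆ ⊗ₜ (b ⊗ₜ d) + a ⊗ₜ (⁅b, c⁆ ⊗ₜ d) + a ⊗ₜ (c ⊗ₜ ⁅b, d⁆)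

def cojacobiForm (x : L) : L ⊗[R] L →ₗ[R] L ⊗[R] L →ₗ[R] L ⊗[R] (L ⊗[R] L) :=
  LinearMap.mk₂ R
    (fun p q => cyc (TensorProduct.assoc R L L L (map (coboundary R L _ p) .id ⁅x, q⁆))
      + ⁅x, S p q⁆)
    (fun p p' q => by
      simp only [map_add, map_add_left, LinearMap.add_apply, lie_add]
      abel)
    (fun c p q => by
      simp only [map_smul, map_smul_left, LinearMap.smul_apply, lie_smul, smul_add])
    (fun p q q' => by
      simp only [map_add, lie_add]
      abel)
    (fun c p q => by simp only [map_smul, lie_smul, smul_add])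

@[simp]
theorem cojacobiForm_apply (x : L) (p q : L ⊗[R] L) :
    cojacobiForm cyc S x p q =
      cyc (TensorProduct.assoc R L L L (map (coboundary R L _ p) .id ⁅x, q⁆)) + ⁅x, S p q⁆ := rfl

variable {cyc S}

theorem cojacobiForm_antisymm_tmul
    (hcyc : IsCyclicSum cyc) (hS : IsSchoutenBracket S) (x a b c d : L) :
    cojacobiForm cyc S x (a ⊗ₜ b - b ⊗ₜ a) (c ⊗ₜ d - d ⊗ₜ c)
      + cojacobiForm cyc S x (c ⊗ₜ d - d ⊗ₜ c) (a ⊗ₜ b - b ⊗ₜ a) = 0 := by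
  unfold IsCyclicSum at hcyc
  unfold IsSchoutenBracket at hS
  have jacobi : ∀ u v : L, ⁅x, ⁅u, v⁆⁆ = ⁅u, ⁅x, v⁆⁆ - ⁅v, ⁅x, u⁆⁆ := fun u v => by
    rw [leibniz_lie, ← lie_skew ⁅x, u⁆ v]
    abel
  have skew : ∀ u v : L, ⁅⁅x, u⁆, v⁆ = -⁅v, ⁅x, u⁆⁆ := fun u v => (lie_skew ⁅x, u⁆ v).symm
  -- Normal form: double brackets as `⁅u, ⁅x, v⁆⁆` and brackets of `a, b, c, d` in alphabetical
  -- order; in it the cancellation is a matter of `abel`.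
  simp only [cojacobiForm_apply, coboundary_apply, map_add, map_sub, LinearMap.sub_apply,
    TensorProduct.LieModule.lie_tmul_right, map_tmul, LinearMap.id_apply, assoc_tmul,
    add_tmul, tmul_add, sub_tmul, tmul_sub, hcyc, hS, lie_add, lie_neg,
    jacobi, skew, ← lie_skew c a, ← lie_skew d a, ← lie_skew c b, ← lie_skew d b,
    tmul_neg, neg_tmul, map_neg]
  abel

theorem cojacobiForm_antisymm
    (hcyc : IsCyclicSum cyc) (hS : IsSchoutenBracket S) (x : L) (p q : L ⊗[R] L) :
    cojacobiForm cyc S x (p - TensorProduct.comm R L L p) (q - TensorProduct.comm R L L q)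
      + cojacobiForm cyc S x (q - TensorProduct.comm R L L q) (p - TensorProduct.comm R L L p)
      = 0 := by
  let A : L ⊗[R] L →ₗ[R] L ⊗[R] L := .id - (TensorProduct.comm R L L).toLinearMap
  have hA : (cojacobiForm cyc S x).compl₁₂ A A + (cojacobiForm cyc S x).flip.compl₁₂ A A = 0 := by
    ext a b c d
    exact cojacobiForm_antisymm_tmul hcyc hS x a b c d
  exact congr($hA p q)

theorem cojacobiForm_self_eq_zero [Invertible (2 : R)]
    (hcyc : IsCyclicSum cyc) (hS : IsSchoutenBracket S)
    (x : L) {r : L ⊗[R] L} (hr : TensorProduct.comm R L L r = -r) :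
    cojacobiForm cyc S x r r = 0 := by
  have h := cojacobiForm_antisymm hcyc hS x r r
  rw [hr, sub_neg_eq_add, ← two_smul R r] at h
  simp only [map_smul, LinearMap.smul_apply, smul_smul] at h
  rw [← two_smul R, smul_smul] at h
  have h2 := isUnit_of_invertible (2 : R)
  exact ((h2.mul (h2.mul h2)).smul_eq_zero).mp h

end LieAlgebra

open LieAlgebra in
/-- An antisymmetric `r ∈ ∧²g` defines a coboundary Lie bialgebra via
`δ_r(x) = [x ⊗ 1 + 1 ⊗ x, r]` (i.e. `δ_r` satisfies the co-Jacobi identity) if and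
only if the Schouten bracket `[[r,r]] = [r₁₂,r₁₃] + [r₁₂,r₂₃] + [r₁₃,r₂₃]` is
ad-invariant; this follows from the identity
`Cycl((δ_r ⊗ id)(δ_r x)) + x ▷ [[r,r]] = 0` for all `x ∈ g`. -/
theorem coboundary_lie_bialgebra_iff_schouten_ad_invariant
    (g : Type) [LieRing g] [LieAlgebra ℂ g]
    (r : g ⊗[ℂ] g)
    (hr : TensorProduct.comm ℂ g g r = -r)
    -- the cyclic sum on `g ⊗ g ⊗ g`
    (cyc : g ⊗[ℂ] (g ⊗[ℂ] g) →ₗ[ℂ] g ⊗[ℂ] (g ⊗[ℂ] g))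
    (hcyc : ∀ a b c : g, cyc (a ⊗ₜ[ℂ] (b ⊗ₜ[ℂ] c)) =
      a ⊗ₜ[ℂ] (b ⊗ₜ[ℂ] c) + c ⊗ₜ[ℂ] (a ⊗ₜ[ℂ] b) + b ⊗ₜ[ℂ] (c ⊗ₜ[ℂ] a))
    -- the Schouten bracket as a bilinear map, on pure tensors
    (S : g ⊗[ℂ] g →ₗ[ℂ] g ⊗[ℂ] g →ₗ[ℂ] g ⊗[ℂ] (g ⊗[ℂ] g))
    (hS : ∀ a b c d : g, S (a ⊗ₜ[ℂ] b) (c ⊗ₜ[ℂ] d) =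
      ⁅a, c⁆ ⊗ₜ[ℂ] (b ⊗ₜ[ℂ] d) + a ⊗ₜ[ℂ] (⁅b, c⁆ ⊗ₜ[ℂ] d) + a ⊗ₜ[ℂ] (c ⊗ₜ[ℂ] ⁅b, d⁆))
    -- `δ_r`
    (δr : g →ₗ[ℂ] g ⊗[ℂ] g)
    (hδr : ∀ x : g, δr x =
      (LinearMap.rTensor g (LieAlgebra.ad ℂ g x)
        + LinearMap.lTensor g (LieAlgebra.ad ℂ g x)) r) :
    -- the identity `Cycl((δ_r ⊗ id) δ_r x) + x ▷ [[r,r]] = 0`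
    (∀ x : g, cyc ((TensorProduct.assoc ℂ g g g)
        ((TensorProduct.map δr LinearMap.id) (δr x)))
      + (LinearMap.rTensor (g ⊗[ℂ] g) (LieAlgebra.ad ℂ g x)
          + LinearMap.lTensor g (LinearMap.rTensor g (LieAlgebra.ad ℂ g x))
          + LinearMap.lTensor g (LinearMap.lTensor g (LieAlgebra.ad ℂ g x))) (S r r)
      = 0) ∧
    -- hence: co-Jacobi for `δ_r` ⇔ ad-invariance of `[[r,r]]`
    ((∀ x : g, cyc ((TensorProduct.assoc ℂ g g g)
        ((TensorProduct.map δr LinearMap.id) (δr x))) = 0)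
      ↔ (∀ x : g,
        (LinearMap.rTensor (g ⊗[ℂ] g) (LieAlgebra.ad ℂ g x)
          + LinearMap.lTensor g (LinearMap.rTensor g (LieAlgebra.ad ℂ g x))
          + LinearMap.lTensor g (LinearMap.lTensor g (LieAlgebra.ad ℂ g x))) (S r r)
        = 0)) := by
  have hδ : δr = coboundary ℂ g _ r := LinearMap.ext hδr
  have hAd : ∀ (x : g) (t : g ⊗[ℂ] (g ⊗[ℂ] g)),
      (LinearMap.rTensor (g ⊗[ℂ] g) (LieAlgebra.ad ℂ g x)
        + LinearMap.lTensor g (LinearMap.rTensor g (LieAlgebra.ad ℂ g x))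
        + LinearMap.lTensor g (LinearMap.lTensor g (LieAlgebra.ad ℂ g x))) t = ⁅x, t⁆ := by
    intro x t
    rw [add_assoc, ← LinearMap.lTensor_add]
    rfl
  have identity : ∀ x : g,
      cyc (TensorProduct.assoc ℂ g g g (map δr .id (δr x))) + ⁅x, S r r⁆ = 0 := by
    intro x
    rw [hδ]
    exact cojacobiForm_self_eq_zero hcyc hS x hr
  simp only [hAd]
  refine ⟨identity, forall_congr' fun x => ?_⟩
  rw [eq_neg_of_add_eq_zero_left (identity x), neg_eq_zero]
end

section
/- In the 3D BMS algebra B₃, the element r = χ(l_n ∧ T_0 − l_0 ∧ T_n) (the light-cone r-matrix) satisfies the classical Yang–Baxter equation [[r, r]] = 0, i.e. it is a triangular classical r-matrix. -/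
open TensorProduct

/-! The structure constants of `B₃` are antisymmetric, so its bracket is alternating. The elements
`x = l_n`, `y = T_0`, `u = l_0`, `v = T_n` span a four-dimensional subalgebra whose only nonzero
brackets are `[x, u] = n x`, `[x, y] = n v` and `[u, v] = -n v`; expanding
`[[x ∧ y - u ∧ v, x ∧ y - u ∧ v]]` with these brackets, all terms cancel. -/

theorem LinearMap.isAlt_of_flip_eq_neg {K M N : Type*} [Field K] [CharZero K] [AddCommGroup M]
    [Module K M] [AddCommGroup N] [Module K N] {β : M →ₗ[K] M →ₗ[K] N} (h : β.flip = -β) :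
    β.IsAlt := by
  intro x
  have hx : β x x + β x x = 0 := by
    nth_rewrite 1 [← LinearMap.flip_apply (f := β), h]
    exact neg_add_cancel _
  rw [← two_smul K] at hx
  exact (smul_eq_zero.mp hx).resolve_left two_ne_zero

section Wedge

variable {R M : Type*} [CommRing R] [AddCommGroup M] [Module R M]

variable (R) in
def wedge (x y : M) : M ⊗[R] M := x ⊗ₜ y - y ⊗ₜ x

theorem cybe_wedge_sub_wedge_eq_zero {β : M →ₗ[R] M →ₗ[R] M} (hβ : β.IsAlt)
    {S : M ⊗[R] M →ₗ[R] M ⊗[R] M →ₗ[R] M ⊗[R] (M ⊗[R] M)}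
    (hS : ∀ a b c d : M, S (a ⊗ₜ b) (c ⊗ₜ d) =
      β a c ⊗ₜ (b ⊗ₜ d) + a ⊗ₜ (β b c ⊗ₜ d) + a ⊗ₜ (c ⊗ₜ β b d))
    (c : R) {x y u v : M}
    (hxu : β x u = c • x) (hxy : β x y = c • v) (huv : β u v = -c • v)
    (hxv : β x v = 0) (huy : β u y = 0) (hyv : β y v = 0) :
    S (wedge R x y - wedge R u v) (wedge R x y - wedge R u v) = 0 := by
  have hux : β u x = -c • x := by rw [← hβ.neg, hxu, neg_smul]
  have hyx : β y x = -c • v := by rw [← hβ.neg, hxy, neg_smul]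
  have hvu : β v u = c • v := by rw [← hβ.neg, huv, neg_smul, neg_neg]
  have hvx : β v x = 0 := by rw [← hβ.neg, hxv, neg_zero]
  have hyu : β y u = 0 := by rw [← hβ.neg, huy, neg_zero]
  have hvy : β v y = 0 := by rw [← hβ.neg, hyv, neg_zero]
  simp only [wedge, map_sub, LinearMap.sub_apply, hS, hβ.self_eq_zero, hxu, hxy, huv, hxv, huy,
    hyv, hux, hyx, hvu, hvx, hyu, hvy, ← smul_tmul', tmul_smul, zero_tmul, tmul_zero,
    neg_smul, neg_tmul, tmul_neg]
  module

end Wedge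

theorem bms3_bracket_isAlt {g : Type*} [AddCommGroup g] [Module ℂ g]
    {L : Module.Basis (ℤ ⊕ ℤ) ℂ g} {β : g →ₗ[ℂ] g →ₗ[ℂ] g}
    (hll : ∀ m n : ℤ, β (L (.inl m)) (L (.inl n)) = ((m - n : ℤ) : ℂ) • L (.inl (m + n)))
    (hlT : ∀ m n : ℤ, β (L (.inl m)) (L (.inr n)) = ((m - n : ℤ) : ℂ) • L (.inr (m + n)))
    (hTl : ∀ m n : ℤ, β (L (.inr m)) (L (.inl n)) = ((m - n : ℤ) : ℂ) • L (.inr (m + n)))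
    (hTT : ∀ m n : ℤ, β (L (.inr m)) (L (.inr n)) = 0) :
    β.IsAlt := by
  refine LinearMap.isAlt_of_flip_eq_neg (LinearMap.ext_basis L L fun i j => ?_)
  rcases i with m | m <;> rcases j with n | n <;>
    simp only [LinearMap.flip_apply, LinearMap.neg_apply, hll, hlT, hTl, hTT, neg_zero,
      ← neg_smul, ← Int.cast_neg, neg_sub, add_comm m n]

/-- In the 3D BMS algebra `B₃` (basis `l_m = L (.inl m)`, `T_m = L (.inr m)`), the
light-cone r-matrix `r = χ (l_n ∧ T_0 − l_0 ∧ T_n)` satisfies the classical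
Yang–Baxter equation `[[r, r]] = 0`, i.e. it is a triangular classical r-matrix.
Here the Schouten bracket `[[·,·]]` is the bilinear map `S` determined on pure
tensors by `S(a⊗b, c⊗d) = ⁅a,c⁆⊗b⊗d + a⊗⁅b,c⁆⊗d + a⊗c⊗⁅b,d⁆`. -/
theorem bms3_lightcone_r_matrix_triangular
    (g : Type) [AddCommGroup g] [Module ℂ g]
    (L : Module.Basis (ℤ ⊕ ℤ) ℂ g)
    (β : g →ₗ[ℂ] g →ₗ[ℂ] g)
    (hll : ∀ m n : ℤ, β (L (.inl m)) (L (.inl n)) = ((m - n : ℤ) : ℂ) • L (.inl (m + n)))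
    (hlT : ∀ m n : ℤ, β (L (.inl m)) (L (.inr n)) = ((m - n : ℤ) : ℂ) • L (.inr (m + n)))
    (hTl : ∀ m n : ℤ, β (L (.inr m)) (L (.inl n)) = ((m - n : ℤ) : ℂ) • L (.inr (m + n)))
    (hTT : ∀ m n : ℤ, β (L (.inr m)) (L (.inr n)) = 0)
    (S : g ⊗[ℂ] g →ₗ[ℂ] g ⊗[ℂ] g →ₗ[ℂ] g ⊗[ℂ] (g ⊗[ℂ] g))
    (hS : ∀ a b c d : g, S (a ⊗ₜ[ℂ] b) (c ⊗ₜ[ℂ] d) =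
      (β a c) ⊗ₜ[ℂ] (b ⊗ₜ[ℂ] d) + a ⊗ₜ[ℂ] ((β b c) ⊗ₜ[ℂ] d) + a ⊗ₜ[ℂ] (c ⊗ₜ[ℂ] (β b d)))
    (χ : ℂ) (n : ℤ)
    (r : g ⊗[ℂ] g)
    (hr : r = χ • ((L (.inl n) ⊗ₜ[ℂ] L (.inr 0) - L (.inr 0) ⊗ₜ[ℂ] L (.inl n))
      - (L (.inl 0) ⊗ₜ[ℂ] L (.inr n) - L (.inr n) ⊗ₜ[ℂ] L (.inl 0)))) :
    S r r = 0 := by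
  have hβ : β.IsAlt := bms3_bracket_isAlt hll hlT hTl hTT
  have hcybe := cybe_wedge_sub_wedge_eq_zero hβ hS (n : ℂ)
    (x := L (.inl n)) (y := L (.inr 0)) (u := L (.inl 0)) (v := L (.inr n))
    (by simp [hll]) (by simp [hlT]) (by simp [hlT]) (by simp [hlT]) (by simp [hlT]) (hTT 0 n)
  rw [hr, map_smul, map_smul, LinearMap.smul_apply, ← wedge, ← wedge, hcybe, smul_zero,
    smul_zero]
end
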